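/- arXiv:2111.14632 — 10 statements merged into one kernel-verified Lean document; each statement's English description precedes it below -/
import Mathlib

section
/- For every infinitely differentiable 1-periodic function u : ℝ → ℝ, one has ∫₀¹ P_{N−1}(t)·e^{−αt} · ( Σ_{k=0}^{N} (N choose k)·(−1)^k·α^{N−k}·u^{(k)}(t) ) dt = u(0). (Equivalently, the 1-periodic function ψ(t) = P_{N−1}(t)e^{−αt} on [0,1) is the Green's function of the periodic exponential operator (D + α·Id)^N, i.e. (D + α·Id)^N ψ equals the periodic Dirac comb, in the sense of periodic distributions.) -/
open Finset

open scoped ContDiff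

namespace GreenAux

/-- The operator `E f = α f - f'` (formal adjoint side applied to test functions). -/
noncomputable def Eop (α : ℝ) (f : ℝ → ℝ) : ℝ → ℝ := fun t => α * f t - deriv f t

/-- The operator `F f = f' + α f`. -/
noncomputable def Fop (α : ℝ) (f : ℝ → ℝ) : ℝ → ℝ := fun t => deriv f t + α * f t

lemma contDiff_Eop {α : ℝ} {f : ℝ → ℝ} (hf : ContDiff ℝ ∞ f) : ContDiff ℝ ∞ (Eop α f) :=
  (contDiff_const.mul hf).sub (contDiff_infty_iff_deriv.mp hf).2

lemma contDiff_Fop {α : ℝ} {f : ℝ → ℝ} (hf : ContDiff ℝ ∞ f) : ContDiff ℝ ∞ (Fop α f) :=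
  ((contDiff_infty_iff_deriv.mp hf).2).add (contDiff_const.mul hf)

lemma contDiff_Eop_iter {α : ℝ} {f : ℝ → ℝ} (hf : ContDiff ℝ ∞ f) (n : ℕ) :
    ContDiff ℝ ∞ ((Eop α)^[n] f) := by
  induction n with
  | zero => exact hf
  | succ n ih => rw [Function.iterate_succ_apply']; exact contDiff_Eop ih

lemma periodic_deriv {f : ℝ → ℝ} (h : Function.Periodic f 1) :
    Function.Periodic (deriv f) 1 := by
  intro x
  have hf : (fun y => f (y + 1)) = f := funext h
  calc deriv f (x + 1) = deriv (fun y => f (y + 1)) x := (deriv_comp_add_const f 1 x).symm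
    _ = deriv f x := by rw [hf]

lemma periodic_Eop_iter {α : ℝ} {f : ℝ → ℝ} (h : Function.Periodic f 1) (n : ℕ) :
    Function.Periodic ((Eop α)^[n] f) 1 := by
  induction n with
  | zero => exact h
  | succ n ih =>
    rw [Function.iterate_succ_apply']
    intro x
    simp only [Eop]
    rw [ih x, periodic_deriv ih x]

/-- Pointwise Lagrange identity / bilinear concomitant. -/
lemma concomitant (α : ℝ) (u : ℝ → ℝ) (hu : ContDiff ℝ ∞ u) (N : ℕ) :
    ∀ (ψ : ℝ → ℝ), ContDiff ℝ ∞ ψ → ∀ t : ℝ,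
    HasDerivAt (fun s => ∑ j ∈ Finset.range N, (Fop α)^[j] ψ s * (Eop α)^[N - 1 - j] u s)
      ((Fop α)^[N] ψ t * u t - ψ t * (Eop α)^[N] u t) t := by
  induction N with
  | zero =>
    intro ψ hψ t
    simpa using hasDerivAt_const t (0 : ℝ)
  | succ N ih =>
    intro ψ hψ t
    have hEN : ContDiff ℝ ∞ ((Eop α)^[N] u) := contDiff_Eop_iter hu N
    have h1 : HasDerivAt (fun s => ψ s * (Eop α)^[N] u s)
        (deriv ψ t * (Eop α)^[N] u t + ψ t * deriv ((Eop α)^[N] u) t) t :=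
      ((hψ.differentiable (by simp) t).hasDerivAt).mul
        ((hEN.differentiable (by simp) t).hasDerivAt)
    have h2 := ih (Fop α ψ) (contDiff_Fop hψ) t
    have hfun : (fun s => ∑ j ∈ Finset.range (N + 1), (Fop α)^[j] ψ s * (Eop α)^[N + 1 - 1 - j] u s)
        = fun s => (∑ j ∈ Finset.range N, (Fop α)^[j] (Fop α ψ) s * (Eop α)^[N - 1 - j] u s)
            + ψ s * (Eop α)^[N] u s := by
      funext s
      rw [Finset.sum_range_succ']
      refine congrArg₂ (· + ·) (Finset.sum_congr rfl fun j hj => ?_) (by simp)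
      rw [Function.iterate_succ_apply, show N + 1 - 1 - (j + 1) = N - 1 - j from by omega]
    rw [hfun]
    have h3 := h2.add h1
    refine h3.congr_deriv ?_
    have e1 : (Fop α)^[N + 1] ψ t = (Fop α)^[N] (Fop α ψ) t := by
      rw [Function.iterate_succ_apply]
    have e2 : (Eop α)^[N + 1] u t = α * (Eop α)^[N] u t - deriv ((Eop α)^[N] u) t := by
      rw [Function.iterate_succ_apply']; rfl
    have e3 : Fop α ψ t = deriv ψ t + α * ψ t := rfl
    rw [e1, e2, e3]
    ring

/-- Binomial expansion of `(α - D)^N`. -/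
lemma Eop_iter_eq (α : ℝ) {u : ℝ → ℝ} (hu : ContDiff ℝ ∞ u) (N : ℕ) :
    (Eop α)^[N] u = fun t => ∑ k ∈ Finset.range (N + 1),
      (N.choose k : ℝ) * (-1) ^ k * α ^ (N - k) * iteratedDeriv k u t := by
  induction N with
  | zero => funext t; simp [iteratedDeriv_zero]
  | succ N ih =>
    have hdiff : ∀ k : ℕ, Differentiable ℝ (iteratedDeriv k u) := fun k =>
      hu.differentiable_iteratedDeriv k (by exact_mod_cast WithTop.coe_lt_top k)
    rw [Function.iterate_succ_apply', ih]
    funext t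
    simp only [Eop]
    have hder : deriv (fun s => ∑ k ∈ Finset.range (N + 1),
        (N.choose k : ℝ) * (-1) ^ k * α ^ (N - k) * iteratedDeriv k u s) t
        = ∑ k ∈ Finset.range (N + 1),
          (N.choose k : ℝ) * (-1) ^ k * α ^ (N - k) * iteratedDeriv (k + 1) u t := by
      have : HasDerivAt (fun s => ∑ k ∈ Finset.range (N + 1),
          (N.choose k : ℝ) * (-1) ^ k * α ^ (N - k) * iteratedDeriv k u s)
          (∑ k ∈ Finset.range (N + 1),
            (N.choose k : ℝ) * (-1) ^ k * α ^ (N - k) * iteratedDeriv (k + 1) u t) t := by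
        refine HasDerivAt.fun_sum fun k _ => ?_
        have h := ((hdiff k) t).hasDerivAt
        rw [← iteratedDeriv_succ] at h
        exact h.const_mul _
      exact this.deriv
    rw [hder, Finset.mul_sum]
    -- reindex RHS
    rw [Finset.sum_range_succ' (fun k => ((N+1).choose k : ℝ) * (-1) ^ k * α ^ (N + 1 - k)
      * iteratedDeriv k u t) (N + 1)]
    rw [Finset.sum_range_succ' (fun k => α * ((N.choose k : ℝ) * (-1) ^ k * α ^ (N - k)
      * iteratedDeriv k u t)) N]
    have hext : ∑ j ∈ Finset.range N, α * ((N.choose (j+1) : ℝ) * (-1) ^ (j+1) * α ^ (N - (j+1))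
        * iteratedDeriv (j+1) u t)
        = ∑ j ∈ Finset.range (N + 1), α * ((N.choose (j+1) : ℝ) * (-1) ^ (j+1) * α ^ (N - (j+1))
        * iteratedDeriv (j+1) u t) := by
      rw [Finset.sum_range_succ, Nat.choose_succ_self]
      simp
    rw [hext]
    have hmain : ∑ j ∈ Finset.range (N + 1),
        (α * ((N.choose (j+1) : ℝ) * (-1) ^ (j+1) * α ^ (N - (j+1)) * iteratedDeriv (j+1) u t)
          - (N.choose j : ℝ) * (-1) ^ j * α ^ (N - j) * iteratedDeriv (j+1) u t)
        = ∑ j ∈ Finset.range (N + 1), ((N+1).choose (j+1) : ℝ) * (-1) ^ (j+1) * α ^ (N + 1 - (j+1))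
          * iteratedDeriv (j+1) u t := by
      refine Finset.sum_congr rfl fun j hj => ?_
      have hjN : j ≤ N := by simpa [Nat.lt_succ_iff] using hj
      rw [Nat.choose_succ_succ N j, Nat.cast_add]
      have hsub : N + 1 - (j + 1) = N - j := by omega
      rw [hsub]
      rcases lt_or_eq_of_le hjN with h | h
      · have h1 : N - (j + 1) + 1 = N - j := by omega
        have : α * α ^ (N - (j+1)) = α ^ (N - j) := by
          rw [← pow_succ', show N - (j+1) + 1 = N - j from by omega]
        rw [← this]
        ring
      · subst h
        rw [Nat.choose_succ_self]
        push_cast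
        simp [Nat.sub_self]
        ring
    have h0 : α * ((N.choose 0 : ℝ) * (-1) ^ 0 * α ^ (N - 0) * iteratedDeriv 0 u t)
        = ((N+1).choose 0 : ℝ) * (-1) ^ 0 * α ^ (N + 1 - 0) * iteratedDeriv 0 u t := by
      simp [pow_succ]
      ring
    have key : ∀ S1 S2 S3 x y : ℝ, S1 - S2 = S3 → x = y → S1 + x - S2 = S3 + y := by
      intro S1 S2 S3 x y h1 h2; rw [← h1, h2]; ring
    refine key _ _ _ _ _ ?_ h0
    rw [← Finset.sum_sub_distrib]
    exact hmain

lemma contDiff_polyeval (Q : Polynomial ℝ) : ContDiff ℝ ∞ (fun t : ℝ => Q.eval t) := by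
  induction Q using Polynomial.induction_on' with
  | add p q hp hq => simp only [Polynomial.eval_add]; exact hp.add hq
  | monomial n a =>
    simp only [Polynomial.eval_monomial]
    exact contDiff_const.mul (contDiff_id.pow n)

lemma contDiff_psi (α : ℝ) (Q : Polynomial ℝ) :
    ContDiff ℝ ∞ (fun t => Q.eval t * Real.exp (-α * t)) :=
  (contDiff_polyeval Q).mul (Real.contDiff_exp.comp (contDiff_const.mul contDiff_id))

lemma Fop_poly (α : ℝ) (Q : Polynomial ℝ) :
    Fop α (fun t => Q.eval t * Real.exp (-α * t))
      = fun t => (Polynomial.derivative Q).eval t * Real.exp (-α * t) := by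
  funext t
  have hexp : HasDerivAt (fun s : ℝ => Real.exp (-α * s)) (Real.exp (-α * t) * -α) t := by
    have h1 : HasDerivAt (fun s : ℝ => -α * s) (-α) t := by
      simpa using (hasDerivAt_id t).const_mul (-α)
    exact h1.exp
  have h : HasDerivAt (fun s => Q.eval s * Real.exp (-α * s))
      (Q.derivative.eval t * Real.exp (-α * t) + Q.eval t * (Real.exp (-α * t) * -α)) t :=
    (Q.hasDerivAt t).mul hexp
  simp only [Fop]
  rw [h.deriv]
  ring

lemma Fop_iter_poly (α : ℝ) (Q : Polynomial ℝ) (j : ℕ) :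
    (Fop α)^[j] (fun t => Q.eval t * Real.exp (-α * t))
      = fun t => (Polynomial.derivative^[j] Q).eval t * Real.exp (-α * t) := by
  induction j generalizing Q with
  | zero => rfl
  | succ j ih =>
    rw [Function.iterate_succ_apply, Fop_poly, ih, Function.iterate_succ_apply]

lemma eval_iter (b : ℕ → ℝ) (N j : ℕ) (x : ℝ) :
    (Polynomial.derivative^[j] (∑ k ∈ Finset.range N,
        Polynomial.C (b k / (Nat.factorial k : ℝ)) * Polynomial.X ^ k)).eval x
      = ∑ k ∈ Finset.range N,
          b k / (Nat.factorial k : ℝ) * ((Nat.descFactorial k j : ℝ) * x ^ (k - j)) := by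
  rw [Polynomial.iterate_derivative_sum, Polynomial.eval_finset_sum]
  refine Finset.sum_congr rfl fun k _ => ?_
  rw [Polynomial.iterate_derivative_C_mul, Polynomial.iterate_derivative_X_pow_eq_C_mul]
  simp [mul_assoc]

lemma eval_iter_zero (b : ℕ → ℝ) (N j : ℕ) (hj : j < N) :
    (Polynomial.derivative^[j] (∑ k ∈ Finset.range N,
        Polynomial.C (b k / (Nat.factorial k : ℝ)) * Polynomial.X ^ k)).eval 0 = b j := by
  rw [eval_iter]
  rw [Finset.sum_eq_single j]
  · rw [Nat.descFactorial_self, Nat.sub_self, pow_zero, mul_one,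
      div_mul_cancel₀]
    exact Nat.cast_ne_zero.mpr (Nat.factorial_pos j).ne'
  · intro k _ hkj
    rcases lt_or_gt_of_ne hkj with h | h
    · rw [Nat.descFactorial_eq_zero_iff_lt.mpr h]
      simp
    · rw [zero_pow (by omega : k - j ≠ 0)]
      simp
  · intro hji
    exact absurd (Finset.mem_range.mpr hj) hji

lemma eval_iter_one (b : ℕ → ℝ) (N j : ℕ) (hj : j < N) :
    (Polynomial.derivative^[j] (∑ k ∈ Finset.range N,
        Polynomial.C (b k / (Nat.factorial k : ℝ)) * Polynomial.X ^ k)).eval 1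
      = b j + ∑ i ∈ Finset.Icc 1 (N - 1 - j), b (j + i) / (Nat.factorial i : ℝ) := by
  rw [eval_iter]
  simp only [one_pow, mul_one]
  have h1 : ∑ k ∈ Finset.range N, b k / (Nat.factorial k : ℝ) * (Nat.descFactorial k j : ℝ)
      = ∑ k ∈ Finset.Ico j N, b k / (Nat.factorial k : ℝ) * (Nat.descFactorial k j : ℝ) := by
    refine (Finset.sum_subset ?_ ?_).symm
    · intro k hk
      simp only [Finset.mem_Ico] at hk
      exact Finset.mem_range.mpr hk.2
    · intro k hk hnk
      simp only [Finset.mem_range] at hk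
      simp only [Finset.mem_Ico, not_and, not_lt] at hnk
      have hkj : k < j := by
        by_contra h
        have := hnk (by omega)
        omega
      rw [Nat.descFactorial_eq_zero_iff_lt.mpr hkj]
      simp
  rw [h1, Finset.sum_Ico_eq_sum_range]
  have hterm : ∀ i : ℕ, b (j + i) / (Nat.factorial (j + i) : ℝ) * (Nat.descFactorial (j + i) j : ℝ)
      = b (j + i) / (Nat.factorial i : ℝ) := by
    intro i
    have hfact : (Nat.factorial i : ℝ) * (Nat.descFactorial (j + i) j : ℝ)
        = (Nat.factorial (j + i) : ℝ) := by
      rw [← Nat.cast_mul]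
      congr 1
      have := Nat.factorial_mul_descFactorial (show j ≤ j + i by omega)
      simpa [show j + i - j = i by omega] using this
    have h2 : (Nat.factorial (j + i) : ℝ) ≠ 0 := Nat.cast_ne_zero.mpr (Nat.factorial_pos _).ne'
    have h3 : (Nat.factorial i : ℝ) ≠ 0 := Nat.cast_ne_zero.mpr (Nat.factorial_pos _).ne'
    field_simp
    linear_combination b (j + i) * hfact
  have hIcc : ∑ i ∈ Finset.Icc 1 (N - 1 - j), b (j + i) / (Nat.factorial i : ℝ)
      = ∑ i ∈ Finset.range (N - 1 - j), b (j + (i + 1)) / (Nat.factorial (i + 1) : ℝ) := by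
    rw [← Finset.Ico_add_one_right_eq_Icc, Finset.sum_Ico_eq_sum_range]
    refine Finset.sum_congr (by congr 1) fun i _ => ?_
    rw [Nat.add_comm 1 i]
  have hNj : N - j = (N - 1 - j) + 1 := by omega
  rw [hNj, Finset.sum_range_succ']
  simp only [hterm]
  rw [hIcc]
  simp only [add_zero, Nat.factorial_zero, Nat.cast_one, div_one]
  exact add_comm _ _

lemma contDiff_Fop_iter {α : ℝ} {f : ℝ → ℝ} (hf : ContDiff ℝ ∞ f) (n : ℕ) :
    ContDiff ℝ ∞ ((Fop α)^[n] f) := by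
  induction n with
  | zero => exact hf
  | succ n ih => rw [Function.iterate_succ_apply']; exact contDiff_Fop ih

lemma natDegree_lt (b : ℕ → ℝ) (N : ℕ) (hN : 1 ≤ N) :
    (∑ k ∈ Finset.range N,
      Polynomial.C (b k / (Nat.factorial k : ℝ)) * Polynomial.X ^ k).natDegree < N := by
  have h : (∑ k ∈ Finset.range N,
      Polynomial.C (b k / (Nat.factorial k : ℝ)) * Polynomial.X ^ k).natDegree ≤ N - 1 := by
    refine Polynomial.natDegree_sum_le_of_forall_le _ _ fun k hk => ?_
    refine le_trans (Polynomial.natDegree_mul_le) ?_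
    simp only [Polynomial.natDegree_C, Polynomial.natDegree_X_pow, zero_add]
    simp only [Finset.mem_range] at hk
    omega
  omega

lemma boundary (α : ℝ) (hα : 0 < α) (N : ℕ) (hN : 1 ≤ N) (b : ℕ → ℝ)
    (hb_top : b (N - 1) = 1 / (1 - Real.exp (-α)))
    (hb_rec : ∀ k, 2 ≤ k → k ≤ N →
      b (N - k) = Real.exp (-α) / (1 - Real.exp (-α)) *
        ∑ i ∈ Finset.Icc 1 (k - 1), b (N - k + i) / (Nat.factorial i : ℝ))
    (j : ℕ) (hj : j < N) :
    (Polynomial.derivative^[j] (∑ k ∈ Finset.range N,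
        Polynomial.C (b k / (Nat.factorial k : ℝ)) * Polynomial.X ^ k)).eval 0
      - Real.exp (-α) * (Polynomial.derivative^[j] (∑ k ∈ Finset.range N,
        Polynomial.C (b k / (Nat.factorial k : ℝ)) * Polynomial.X ^ k)).eval 1
      = if j = N - 1 then 1 else 0 := by
  have hlt : Real.exp (-α) < 1 := by
    rw [← Real.exp_zero]
    exact Real.exp_lt_exp.mpr (by linarith)
  have hne : 1 - Real.exp (-α) ≠ 0 := ne_of_gt (by linarith)
  rw [eval_iter_zero b N j hj, eval_iter_one b N j hj]
  by_cases hcase : j = N - 1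
  · subst hcase
    rw [if_pos rfl]
    rw [Finset.Icc_eq_empty (by omega), Finset.sum_empty, add_zero, hb_top]
    field_simp
  · rw [if_neg hcase]
    have hrec := hb_rec (N - j) (by omega) (by omega)
    rw [show N - (N - j) = j from by omega] at hrec
    rw [show N - j - 1 = N - 1 - j from by omega] at hrec
    rw [hrec]
    field_simp
    ring

end GreenAux

open GreenAux in
/-- Let `α > 0`, `A = e^{−α}/(1 − e^{−α})`, let `N ≥ 1`, and let
`b : ℕ → ℝ` satisfy `b (N−1) = 1/(1 − e^{−α})` and, for `2 ≤ k ≤ N`,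
`b (N−k) = A · Σ_{i=1}^{k−1} b (N−k+i)/i!`.  Set `P = Σ_{k<N} (b k / k!)·X^k`.
Then for every infinitely differentiable 1-periodic function `u : ℝ → ℝ`,
`∫₀¹ P(t)·e^{−αt}·(Σ_{k=0}^{N} (N choose k)·(−1)^k·α^{N−k}·u^{(k)}(t)) dt = u 0`,
i.e. the 1-periodic function `ψ(t) = P(t)e^{−αt}` is the Green's function of the
periodic exponential operator `(D + α)^N`. -/
theorem green_function_periodic_exponential_operator
    (α : ℝ) (hα : 0 < α) (N : ℕ) (hN : 1 ≤ N)
    (b : ℕ → ℝ)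
    (hb_top : b (N - 1) = 1 / (1 - Real.exp (-α)))
    (hb_rec : ∀ k, 2 ≤ k → k ≤ N →
      b (N - k) = Real.exp (-α) / (1 - Real.exp (-α)) *
        ∑ i ∈ Finset.Icc 1 (k - 1), b (N - k + i) / (Nat.factorial i : ℝ))
    (P : Polynomial ℝ)
    (hP : P = ∑ k ∈ Finset.range N,
      Polynomial.C (b k / (Nat.factorial k : ℝ)) * Polynomial.X ^ k)
    (u : ℝ → ℝ) (hu : ContDiff ℝ (⊤ : ℕ∞) u) (hper : Function.Periodic u 1) :
    ∫ t in (0:ℝ)..1, P.eval t * Real.exp (-α * t) *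
        (∑ k ∈ Finset.range (N + 1),
          (N.choose k : ℝ) * (-1) ^ k * α ^ (N - k) * iteratedDeriv k u t)
      = u 0 := by
  have hu' : ContDiff ℝ ∞ u := hu.of_le (by simp)
  set ψ : ℝ → ℝ := fun t => P.eval t * Real.exp (-α * t) with hψdef
  have hψ : ContDiff ℝ ∞ ψ := contDiff_psi α P
  -- the Green's function kills the operator on (0,1)
  have hFj : ∀ j : ℕ, (Fop α)^[j] ψ
      = fun t => (Polynomial.derivative^[j] P).eval t * Real.exp (-α * t) := by
    intro j
    rw [hψdef]
    exact Fop_iter_poly α P j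
  have hFN : (Fop α)^[N] ψ = fun _ => (0:ℝ) := by
    rw [hFj N, Polynomial.iterate_derivative_eq_zero (by rw [hP]; exact natDegree_lt b N hN)]
    funext t
    simp
  -- the concomitant function
  set G : ℝ → ℝ := fun s => ∑ j ∈ Finset.range N, (Fop α)^[j] ψ s * (Eop α)^[N - 1 - j] u s
    with hGdef
  have hG : ∀ t : ℝ, HasDerivAt G
      ((Fop α)^[N] ψ t * u t - ψ t * (Eop α)^[N] u t) t :=
    concomitant α u hu' N ψ hψ
  have hcont : Continuous fun t => (Fop α)^[N] ψ t * u t - ψ t * (Eop α)^[N] u t :=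
    (((contDiff_Fop_iter hψ N).continuous.mul hu'.continuous).sub
      (hψ.continuous.mul (contDiff_Eop_iter hu' N).continuous))
  have heq : ∫ t in (0:ℝ)..1, ((Fop α)^[N] ψ t * u t - ψ t * (Eop α)^[N] u t)
      = G 1 - G 0 :=
    intervalIntegral.integral_eq_sub_of_hasDerivAt (fun t _ => hG t)
      (hcont.intervalIntegrable 0 1)
  have e0 : ∀ t : ℝ, (Fop α)^[N] ψ t * u t - ψ t * (Eop α)^[N] u t
      = -(ψ t * (Eop α)^[N] u t) := by
    intro t
    rw [hFN]
    simp
  have key : ∫ t in (0:ℝ)..1, ψ t * (Eop α)^[N] u t = G 0 - G 1 := by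
    have h1 : ∫ t in (0:ℝ)..1, -(ψ t * (Eop α)^[N] u t) = G 1 - G 0 := by
      rw [← heq]
      exact intervalIntegral.integral_congr fun t _ => (e0 t).symm
    rw [intervalIntegral.integral_neg] at h1
    linarith
  -- compute the boundary term
  have hGval : G 0 - G 1 = u 0 := by
    rw [hGdef]
    simp only
    rw [← Finset.sum_sub_distrib]
    have hterm : ∀ j ∈ Finset.range N,
        (Fop α)^[j] ψ 0 * (Eop α)^[N - 1 - j] u 0 - (Fop α)^[j] ψ 1 * (Eop α)^[N - 1 - j] u 1
        = (if j = N - 1 then 1 else 0) * (Eop α)^[N - 1 - j] u 0 := by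
      intro j hj
      simp only [Finset.mem_range] at hj
      have hper' : (Eop α)^[N - 1 - j] u 1 = (Eop α)^[N - 1 - j] u 0 := by
        have := periodic_Eop_iter (α := α) hper (N - 1 - j) 0
        simpa using this
      rw [hper', hFj j]
      simp only
      rw [mul_zero, Real.exp_zero, mul_one, mul_one]
      have hb := boundary α hα N hN b hb_top hb_rec j hj
      rw [← hP] at hb
      rw [← sub_mul, ← hb]
      ring_nf
    rw [Finset.sum_congr rfl hterm]
    have hsum : ∑ j ∈ Finset.range N, (if j = N - 1 then (1:ℝ) else 0) * (Eop α)^[N - 1 - j] u 0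
        = (Eop α)^[N - 1 - (N - 1)] u 0 := by
      rw [Finset.sum_eq_single (N - 1)]
      · rw [if_pos rfl, one_mul]
      · intro k _ hk
        rw [if_neg hk, zero_mul]
      · intro hmem
        exact absurd (Finset.mem_range.mpr (by omega)) hmem
    rw [hsum, show N - 1 - (N - 1) = 0 from by omega]
    rfl
  calc ∫ t in (0:ℝ)..1, P.eval t * Real.exp (-α * t) *
        (∑ k ∈ Finset.range (N + 1),
          (N.choose k : ℝ) * (-1) ^ k * α ^ (N - k) * iteratedDeriv k u t)
      = ∫ t in (0:ℝ)..1, ψ t * (Eop α)^[N] u t := by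
        refine intervalIntegral.integral_congr fun t _ => ?_
        rw [Eop_iter_eq α hu' N]
    _ = G 0 - G 1 := key
    _ = u 0 := hGval
end

section
/- The polynomial P_{N−1} satisfies the boundary identities: for every integer k with 0 ≤ k ≤ N−2, P_{N−1}^{(k)}(0) − e^{−α}·P_{N−1}^{(k)}(1) = 0, and for k = N−1, P_{N−1}^{(N−1)}(0) − e^{−α}·P_{N−1}^{(N−1)}(1) = 1, where P^{(k)} denotes the k-th derivative of the polynomial P. -/
open Polynomial Finset Nat

/-!
The derivative of `∑ c_j X^j / j!` is `∑ c_{j+1} X^j / j!`, so the `k`-th derivative of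
`P = ∑_{j<N} b_j X^j / j!` has the same shape with the shifted sequence `b_{k+j}`. Hence
`P^{(k)}(0) = b_k` and `P^{(k)}(1) = ∑_{i<N-k} b_{k+i} / i!`, and the recursion defining `b_k`
is precisely the boundary identity solved for `b_k`.
-/

lemma Finset.sum_range_eq_add_sum_Icc_one {M : Type*} [AddCommMonoid M] (f : ℕ → M) {m : ℕ}
    (hm : 1 ≤ m) : ∑ i ∈ range m, f i = f 0 + ∑ i ∈ Icc 1 (m - 1), f i := by
  obtain ⟨n, rfl⟩ := Nat.exists_eq_add_of_le' hm
  rw [sum_range_succ', add_comm, Nat.add_sub_cancel, ← Finset.Ico_add_one_right_eq_Icc,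
    sum_Ico_eq_sum_range, Nat.add_sub_cancel]
  simp only [add_comm 1]

section

variable {K : Type*} [Field K]

noncomputable def expGenPoly (n : ℕ) (c : ℕ → K) : K[X] :=
  ∑ j ∈ range n, C (c j / j !) * X ^ j

@[simp]
lemma expGenPoly_zero (c : ℕ → K) : expGenPoly 0 c = 0 := by
  simp [expGenPoly]

lemma eval_one_expGenPoly (n : ℕ) (c : ℕ → K) :
    (expGenPoly n c).eval 1 = ∑ i ∈ range n, c i / i ! := by
  simp [expGenPoly, eval_finsetSum]

lemma eval_zero_expGenPoly {n : ℕ} (hn : 0 < n) (c : ℕ → K) :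
    (expGenPoly n c).eval 0 = c 0 := by
  obtain ⟨n, rfl⟩ := Nat.exists_eq_add_of_lt hn
  simp [expGenPoly, eval_finsetSum, sum_range_succ']

variable [CharZero K]

lemma derivative_expGenPoly (n : ℕ) (c : ℕ → K) :
    derivative (expGenPoly n c) = expGenPoly (n - 1) (fun j => c (j + 1)) := by
  cases n with
  | zero => simp
  | succ n =>
    rw [expGenPoly, sum_range_succ', derivative_add, derivative_sum, Nat.add_sub_cancel, expGenPoly]
    refine (add_eq_left.mpr (by simp)).trans (sum_congr rfl fun j _ => ?_)
    rw [derivative_C_mul_X_pow, Nat.add_sub_cancel, Nat.factorial_succ, Nat.cast_mul]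
    congr 2
    have : (j : K) + 1 ≠ 0 := Nat.cast_add_one_ne_zero j
    field_simp

lemma iterate_derivative_expGenPoly (n k : ℕ) (c : ℕ → K) :
    derivative^[k] (expGenPoly n c) = expGenPoly (n - k) (fun j => c (k + j)) := by
  induction k with
  | zero => simp
  | succ k ih =>
    rw [Function.iterate_succ_apply', ih, derivative_expGenPoly, Nat.sub_sub]
    simp only [Nat.add_right_comm k 1, add_assoc]

end

/-- With `α > 0`, `N ≥ 1`, `b` defined by the recursion
`b (N−1) = 1/(1 − e^{−α})`, `b (N−k) = A·Σ_{i=1}^{k−1} b (N−k+i)/i!` for `2 ≤ k ≤ N`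
(where `A = e^{−α}/(1 − e^{−α})`), and `P = Σ_{k<N} (b k/k!)·X^k`, the polynomial `P`
satisfies the boundary identities:
for every `k ≤ N−2`, `P^{(k)}(0) − e^{−α}·P^{(k)}(1) = 0`, and
`P^{(N−1)}(0) − e^{−α}·P^{(N−1)}(1) = 1`. -/
theorem boundary_identities_exponential_spline_polynomial
    (α : ℝ) (hα : 0 < α) (N : ℕ) (hN : 1 ≤ N)
    (b : ℕ → ℝ)
    (hb_top : b (N - 1) = 1 / (1 - Real.exp (-α)))
    (hb_rec : ∀ k, 2 ≤ k → k ≤ N →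
      b (N - k) = Real.exp (-α) / (1 - Real.exp (-α)) *
        ∑ i ∈ Finset.Icc 1 (k - 1), b (N - k + i) / (Nat.factorial i : ℝ))
    (P : Polynomial ℝ)
    (hP : P = ∑ k ∈ Finset.range N,
      Polynomial.C (b k / (Nat.factorial k : ℝ)) * Polynomial.X ^ k) :
    (∀ k : ℕ, k + 2 ≤ N →
        (Polynomial.derivative^[k] P).eval 0
          - Real.exp (-α) * (Polynomial.derivative^[k] P).eval 1 = 0)
      ∧ (Polynomial.derivative^[N - 1] P).eval 0
          - Real.exp (-α) * (Polynomial.derivative^[N - 1] P).eval 1 = 1 := by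
  replace hP : P = expGenPoly N b := hP
  have hq : 1 - Real.exp (-α) ≠ 0 := (sub_pos.2 (Real.exp_lt_one_iff.2 (neg_lt_zero.2 hα))).ne'
  subst hP
  refine ⟨fun k hk => ?_, ?_⟩
  · have hrec := hb_rec (N - k) (by omega) (by omega)
    rw [Nat.sub_sub_self (by omega)] at hrec
    rw [iterate_derivative_expGenPoly, eval_zero_expGenPoly (by omega), eval_one_expGenPoly,
      sum_range_eq_add_sum_Icc_one _ (by omega), add_zero, Nat.factorial_zero, Nat.cast_one,
      div_one, hrec]
    field_simp
    ring
  · rw [iterate_derivative_expGenPoly, Nat.sub_sub_self hN, eval_zero_expGenPoly one_pos,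
      eval_one_expGenPoly, sum_range_one, add_zero, Nat.factorial_zero, Nat.cast_one, div_one,
      hb_top]
    field_simp
end

section
/- Let α > 0 and define ψ : [0,1) → ℝ by ψ(t) = ( t/(1−e^{−α}) + e^{−α}/(1−e^{−α})² )·e^{−αt}. Then for every infinitely differentiable 1-periodic function u : ℝ → ℝ, ∫₀¹ ψ(t)·( u''(t) − 2α·u'(t) + α²·u(t) ) dt = u(0). (That is, ψ is the Green's function of the periodic operator (D + α·Id)².) -/
open MeasureTheory Real

/-- Let `α > 0` and `ψ(t) = (t/(1−e^{−α}) + e^{−α}/(1−e^{−α})²)·e^{−αt}`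
on `[0,1)`.  Then for every infinitely differentiable 1-periodic `u : ℝ → ℝ`,
`∫₀¹ ψ(t)·(u''(t) − 2α·u'(t) + α²·u(t)) dt = u 0`, i.e. `ψ` is the Green's function of
the periodic operator `(D + α·Id)²`. -/
theorem green_function_periodic_exponential_operator_order_two
    (α : ℝ) (hα : 0 < α)
    (ψ : ℝ → ℝ)
    (hψ : ∀ t ∈ Set.Ico (0:ℝ) 1,
      ψ t = (t / (1 - Real.exp (-α)) + Real.exp (-α) / (1 - Real.exp (-α)) ^ 2)
        * Real.exp (-α * t))
    (u : ℝ → ℝ) (hu : ContDiff ℝ (⊤ : ℕ∞) u) (hper : Function.Periodic u 1) :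
    ∫ t in (0:ℝ)..1,
        ψ t * (deriv (deriv u) t - 2 * α * deriv u t + α ^ 2 * u t) = u 0 := by
  set q := Real.exp (-α) with hq
  have hq1 : q < 1 := by
    rw [hq]; have := Real.exp_lt_one_iff.mpr (by linarith : -α < 0); exact this
  have hqne : (1 : ℝ) - q ≠ 0 := by linarith
  set a : ℝ := 1 / (1 - q) with ha
  set b : ℝ := q / (1 - q) ^ 2 with hb
  have hu' : ContDiff ℝ ((⊤:ℕ∞):WithTop ℕ∞) u := hu.of_le (by simp)
  have hu1 : ContDiff ℝ ((⊤:ℕ∞):WithTop ℕ∞) (deriv u) := (contDiff_infty_iff_deriv.mp hu').2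
  have hud : Differentiable ℝ u := hu.differentiable (by simp)
  have hu1d : Differentiable ℝ (deriv u) := hu1.differentiable (by simp)
  -- derivative facts
  have he : ∀ t : ℝ, HasDerivAt (fun t => Real.exp (-α * t)) (Real.exp (-α * t) * (-α)) t := by
    intro t
    have h1 : HasDerivAt (fun x : ℝ => -α * x) (-α) t := by
      simpa using (hasDerivAt_id t).const_mul (-α)
    simpa [Function.comp_def] using (Real.hasDerivAt_exp (-α * t)).comp t h1
  set v' : ℝ → ℝ := fun t => Real.exp (-α * t) * (deriv u t - α * u t) with hv'def
  have hv : ∀ t : ℝ, HasDerivAt (fun t => Real.exp (-α * t) * u t) (v' t) t := by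
    intro t
    have := (he t).mul (hud t).hasDerivAt
    refine this.congr_deriv ?_
    simp [hv'def]; ring
  have hv' : ∀ t : ℝ, HasDerivAt v'
      (Real.exp (-α * t) * (deriv (deriv u) t - 2 * α * deriv u t + α ^ 2 * u t)) t := by
    intro t
    have h2 : HasDerivAt (fun t => deriv u t - α * u t)
        (deriv (deriv u) t - α * deriv u t) t :=
      (hu1d t).hasDerivAt.sub (((hud t).hasDerivAt).const_mul α)
    have := (he t).mul h2
    refine this.congr_deriv ?_
    ring
  set f : ℝ → ℝ := fun t =>
    (a * t + b) * (Real.exp (-α * t) * (deriv (deriv u) t - 2 * α * deriv u t + α ^ 2 * u t))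
    with hfdef
  set F : ℝ → ℝ := fun t => (a * t + b) * v' t - a * (Real.exp (-α * t) * u t) with hFdef
  have hF : ∀ t : ℝ, HasDerivAt F (f t) t := by
    intro t
    have hab : HasDerivAt (fun t : ℝ => a * t + b) a t := by
      simpa using ((hasDerivAt_id t).const_mul a).add_const b
    have := (hab.mul (hv' t)).sub ((hv t).const_mul a)
    refine this.congr_deriv ?_
    simp only [hfdef]
    ring
  have hcont : Continuous f := by
    have hc1 : Continuous (deriv (deriv u)) := ((contDiff_infty_iff_deriv.mp hu1).2).continuous
    fun_prop
  have hint : (∫ t in (0:ℝ)..1, f t) = F 1 - F 0 :=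
    intervalIntegral.integral_eq_sub_of_hasDerivAt (fun t _ => hF t)
      (hcont.intervalIntegrable 0 1)
  have hcongr : (∫ t in (0:ℝ)..1,
      ψ t * (deriv (deriv u) t - 2 * α * deriv u t + α ^ 2 * u t)) = ∫ t in (0:ℝ)..1, f t := by
    apply intervalIntegral.integral_congr_ae
    have hone : ∀ᵐ t : ℝ, t ≠ 1 := by
      rw [MeasureTheory.ae_iff]
      simp
    filter_upwards [hone] with t ht htI
    rw [Set.uIoc_of_le (by norm_num)] at htI
    have htIco : t ∈ Set.Ico (0:ℝ) 1 := ⟨htI.1.le, lt_of_le_of_ne htI.2 ht⟩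
    rw [hψ t htIco]
    simp only [hfdef, ha, hb]
    ring
  rw [hcongr, hint]
  -- evaluate
  have hu10 : u 1 = u 0 := by simpa using hper 0
  have hdu10 : deriv u 1 = deriv u 0 := by
    have h1 : (fun x : ℝ => u (x + 1)) = u := funext fun x => hper x
    have h2 : deriv (fun x : ℝ => u (x + 1)) 0 = deriv u 1 := by
      simpa using deriv_comp_add_const u 1 0
    rw [h1] at h2
    exact h2.symm
  simp only [hFdef, hv'def, hu10, hdu10, ha, hb]
  rw [show (-α * 1 : ℝ) = -α by ring, show (-α * 0 : ℝ) = 0 by ring, Real.exp_zero, ← hq]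
  field_simp
  ring
end

section
/- For every integer N ≥ 1, the polynomial P_N built by the recursion for order N+1 and the polynomial P_{N−1} built by the same recursion for order N satisfy (P_N)' = P_{N−1}, where (P_N)' denotes the derivative of the polynomial P_N. -/
/-! The recursion determines `b (N - k)` from `b (N - k + 1), …, b (N - 1)` by a rule that does
not depend on `N`, so read from the top index downward the coefficients of order `N + 1` and of
order `N` coincide: `b' (j + 1) = b j`. Differentiating `∑ b' k / k! · X ^ k` termwise shifts the
coefficients down by one, which gives `P_N' = P_{N-1}`. -/

open Polynomial Finset
open scoped Nat

theorem Polynomial.derivative_sum_range_succ_C_div_factorial_mul_X_pow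
    {K : Type*} [Field K] [CharZero K] (c : ℕ → K) (n : ℕ) :
    derivative (∑ k ∈ range (n + 1), C (c k / (k ! : K)) * X ^ k)
      = ∑ k ∈ range n, C (c (k + 1) / (k ! : K)) * X ^ k := by
  rw [map_sum, sum_range_succ']
  simp only [pow_zero, mul_one, derivative_C, add_zero, derivative_C_mul_X_pow]
  refine sum_congr rfl fun k _ => ?_
  congr 1
  rw [Nat.factorial_succ, Nat.cast_mul]
  field_simp

def IsSplineCoeffSeq {K : Type*} [DivisionRing K] (t A : K) (N : ℕ) (b : ℕ → K) : Prop :=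
  b (N - 1) = t ∧
    ∀ k, 2 ≤ k → k ≤ N → b (N - k) = A * ∑ i ∈ Icc 1 (k - 1), b (N - k + i) / (i ! : K)

namespace IsSplineCoeffSeq

variable {K : Type*} [DivisionRing K] {t A : K} {M N : ℕ} {u v : ℕ → K}

theorem apply_sub_eq_apply_sub (hu : IsSplineCoeffSeq t A N u) (hv : IsSplineCoeffSeq t A M v) :
    ∀ k, 1 ≤ k → k ≤ N → k ≤ M → u (N - k) = v (M - k) := by
  intro k
  induction k using Nat.strong_induction_on with
  | _ k ih =>
    intro hk1 hkN hkM
    obtain rfl | hk2 := eq_or_lt_of_le hk1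
    · rw [hu.1, hv.1]
    rw [hu.2 k hk2 hkN, hv.2 k hk2 hkM]
    refine congrArg (A * ·) (sum_congr rfl fun i hi => ?_)
    rw [mem_Icc] at hi
    have e_u : N - k + i = N - (k - i) := by omega
    have e_v : M - k + i = M - (k - i) := by omega
    rw [e_u, e_v, ih (k - i) (by omega) (by omega) (by omega) (by omega)]

theorem succ_apply_succ (hv : IsSplineCoeffSeq t A (N + 1) v) (hu : IsSplineCoeffSeq t A N u)
    {j : ℕ} (hj : j < N) : v (j + 1) = u j := by
  have h := hv.apply_sub_eq_apply_sub hu (N - j) (by omega) (by omega) (by omega)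
  rwa [show N + 1 - (N - j) = j + 1 by omega, show N - (N - j) = j by omega] at h

end IsSplineCoeffSeq

theorem derivative_of_next_order_exponential_spline_polynomial_general
    (α : ℝ) (N : ℕ)
    (b b' : ℕ → ℝ)
    (hb_top : b (N - 1) = 1 / (1 - Real.exp (-α)))
    (hb_rec : ∀ k, 2 ≤ k → k ≤ N →
      b (N - k) = Real.exp (-α) / (1 - Real.exp (-α)) *
        ∑ i ∈ Finset.Icc 1 (k - 1), b (N - k + i) / (Nat.factorial i : ℝ))
    (hb'_top : b' (N + 1 - 1) = 1 / (1 - Real.exp (-α)))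
    (hb'_rec : ∀ k, 2 ≤ k → k ≤ N + 1 →
      b' (N + 1 - k) = Real.exp (-α) / (1 - Real.exp (-α)) *
        ∑ i ∈ Finset.Icc 1 (k - 1), b' (N + 1 - k + i) / (Nat.factorial i : ℝ)) :
    Polynomial.derivative
        (∑ k ∈ Finset.range (N + 1),
          Polynomial.C (b' k / (Nat.factorial k : ℝ)) * Polynomial.X ^ k)
      = ∑ k ∈ Finset.range N,
          Polynomial.C (b k / (Nat.factorial k : ℝ)) * Polynomial.X ^ k := by
  have hb : IsSplineCoeffSeq _ _ N b := ⟨hb_top, hb_rec⟩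
  have hb' : IsSplineCoeffSeq _ _ (N + 1) b' := ⟨hb'_top, hb'_rec⟩
  rw [derivative_sum_range_succ_C_div_factorial_mul_X_pow]
  refine sum_congr rfl fun k hk => ?_
  rw [hb'.succ_apply_succ hb (mem_range.1 hk)]

/-- With `α > 0` and `A = e^{−α}/(1 − e^{−α})`, let `N ≥ 1`.  Let
`b` be the coefficient sequence built by the recursion for order `N`
(`b (N−1) = 1/(1 − e^{−α})`, `b (N−k) = A·Σ_{i=1}^{k−1} b (N−k+i)/i!` for `2 ≤ k ≤ N`)
with polynomial `P_{N−1} = Σ_{k<N} (b k/k!)·X^k`, and let `b'` be the sequence built by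
the same recursion at order `N+1`, with polynomial `P_N = Σ_{k<N+1} (b' k/k!)·X^k`.
Then `(P_N)' = P_{N−1}`. -/
theorem derivative_of_next_order_exponential_spline_polynomial
    (α : ℝ) (hα : 0 < α) (N : ℕ) (hN : 1 ≤ N)
    (b b' : ℕ → ℝ)
    (hb_top : b (N - 1) = 1 / (1 - Real.exp (-α)))
    (hb_rec : ∀ k, 2 ≤ k → k ≤ N →
      b (N - k) = Real.exp (-α) / (1 - Real.exp (-α)) *
        ∑ i ∈ Finset.Icc 1 (k - 1), b (N - k + i) / (Nat.factorial i : ℝ))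
    (hb'_top : b' (N + 1 - 1) = 1 / (1 - Real.exp (-α)))
    (hb'_rec : ∀ k, 2 ≤ k → k ≤ N + 1 →
      b' (N + 1 - k) = Real.exp (-α) / (1 - Real.exp (-α)) *
        ∑ i ∈ Finset.Icc 1 (k - 1), b' (N + 1 - k + i) / (Nat.factorial i : ℝ)) :
    Polynomial.derivative
        (∑ k ∈ Finset.range (N + 1),
          Polynomial.C (b' k / (Nat.factorial k : ℝ)) * Polynomial.X ^ k)
      = ∑ k ∈ Finset.range N,
          Polynomial.C (b k / (Nat.factorial k : ℝ)) * Polynomial.X ^ k :=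
  derivative_of_next_order_exponential_spline_polynomial_general α N b b' hb_top hb_rec hb'_top
    hb'_rec
end

section
/- Let α > 0, let N ≥ 2 be an integer, and define the 1-periodic function ψ : ℝ → ℝ by ψ(r) = P_{N−1}(r − ⌊r⌋)·e^{−α(r−⌊r⌋)}. Let L ≥ 1, let θ_1, …, θ_L ∈ [0,1) be pairwise distinct, let β_1, …, β_L be real numbers, and set f(t) = Σ_{ℓ=1}^{L} β_ℓ·ψ(t − θ_ℓ). If sup_{t ∈ [0,1)} |f(t)| = 1, then the set of saturation points { t ∈ [0,1) : |f(t)| = 1 } is finite and has cardinality at most L·N. -/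
/-!
On the arc of the circle `ℝ/ℤ` that starts at `θ ℓ` and contains no other `θ j`, the function
is `f (θ ℓ + s) = Q_ℓ(s) e^{-αs}` for a polynomial `Q_ℓ` of degree `< N` built from translates
of `P`. As `f` is `1`-periodic, `|f| ≤ 1` everywhere, so a saturation point inside an arc is a
critical point, i.e. a root of `Q_ℓ' - α Q_ℓ`; since `α ≠ 0` this polynomial is nonzero of
degree `< N` unless `Q_ℓ = 0`. Together with the left endpoint, each of the `L` arcs carries at
most `N` saturation points.
-/

open Polynomial

theorem Polynomial.eq_zero_of_derivative_eq_C_mul {R : Type*} [Semiring R] [NoZeroDivisors R]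
    {a : R} (ha : a ≠ 0) {p : R[X]} (h : derivative p = C a * p) : p = 0 := by
  by_contra hp
  have := degree_derivative_lt hp
  rw [h, degree_C_mul ha] at this
  exact lt_irrefl _ this

theorem HasDerivAt.eq_zero_of_abs_le_of_abs_eq {f : ℝ → ℝ} {f' a c : ℝ} (hf : HasDerivAt f f' a)
    (hle : ∀ᶠ x in nhds a, |f x| ≤ c) (heq : |f a| = c) : f' = 0 := by
  rcases (abs_eq (heq ▸ abs_nonneg _)).1 heq with h | h
  · exact IsLocalMax.hasDerivAt_eq_zero (hle.mono fun x hx => h ▸ (le_abs_self _).trans hx) hf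
  · exact IsLocalMin.hasDerivAt_eq_zero (hle.mono fun x hx => h ▸ neg_le_of_abs_le hx) hf

theorem Int.fract_sub_add_fract_sub_lt_one {R : Type*} [CommRing R] [LinearOrder R]
    [IsStrictOrderedRing R] [FloorRing R] {x y z : R} (h : fract (x - y) ≤ fract (x - z)) :
    fract (x - y) + fract (y - z) < 1 := by
  by_contra! hge
  obtain ⟨n, hn⟩ := fract_add (x - y) (y - z)
  rw [sub_add_sub_cancel] at hn
  have hlow : (-1 : R) < n := by linarith [fract_lt_one (y - z)]
  have hhigh : (n : R) < 0 := by linarith [fract_lt_one (x - z)]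
  have : (-1 : ℤ) < n := by exact_mod_cast hlow
  have : n < 0 := by exact_mod_cast hhigh
  omega

theorem Int.fract_sub_eq_add_of_lt_one {R : Type*} [CommRing R] [LinearOrder R]
    [IsStrictOrderedRing R] [FloorRing R] {x y z : R} (h : fract (x - y) + fract (y - z) < 1) :
    fract (x - z) = fract (x - y) + fract (y - z) :=
  fract_eq_iff.2 ⟨add_nonneg (fract_nonneg _) (fract_nonneg _), h, ⌊x - y⌋ + ⌊y - z⌋, by
    rw [fract, fract]; push_cast; ring⟩

noncomputable def expPoly (α : ℝ) (Q : ℝ[X]) (s : ℝ) : ℝ := Q.eval s * Real.exp (-α * s)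

theorem continuous_expPoly (α : ℝ) (Q : ℝ[X]) : Continuous (expPoly α Q) := by
  unfold expPoly
  fun_prop

theorem hasDerivAt_expPoly (α : ℝ) (Q : ℝ[X]) (x : ℝ) :
    HasDerivAt (expPoly α Q) (expPoly α (derivative Q - C α * Q) x) x := by
  refine ((Q.hasDerivAt x).fun_mul ((hasDerivAt_id' x).const_mul (-α)).exp).congr_deriv ?_
  simp only [expPoly, eval_sub, eval_mul, eval_C]
  ring

theorem expPoly_add (α : ℝ) (Q : ℝ[X]) (x u : ℝ) :
    expPoly α Q (x + u) = Real.exp (-α * u) * expPoly α (taylor u Q) x := by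
  simp only [expPoly, taylor_eval, mul_add, Real.exp_add]
  ring

/-- `U` is the interior of an arc and `a` its endpoint, where `expPoly` need not be critical. -/
theorem exists_finset_saturation_expPoly {α : ℝ} (hα : α ≠ 0) {Q : ℝ[X]} {N : ℕ}
    (hQ : Q ∈ degreeLT ℝ N) {U : Set ℝ} (hU : IsOpen U) (hle : ∀ x ∈ U, |expPoly α Q x| ≤ 1)
    (a : ℝ) : ∃ S : Finset ℝ, S.card ≤ N ∧ {s ∈ insert a U | |expPoly α Q s| = 1} ⊆ S := by
  rcases eq_or_ne Q 0 with rfl | hQ0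
  · exact ⟨∅, by simp, fun s hs => by simp [expPoly] at hs⟩
  set R := derivative Q - C α * Q
  have hR : R ≠ 0 := fun h => hQ0 (eq_zero_of_derivative_eq_C_mul hα (sub_eq_zero.1 h))
  have hRdeg : R ∈ degreeLT ℝ N := by
    refine sub_mem (mem_degreeLT.2 (degree_derivative_le.trans_lt (mem_degreeLT.1 hQ))) ?_
    rw [← smul_eq_C_mul]
    exact Submodule.smul_mem _ _ hQ
  refine ⟨insert a R.roots.toFinset, ?_, ?_⟩
  · calc (insert a R.roots.toFinset).card ≤ R.roots.toFinset.card + 1 := Finset.card_insert_le _ _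
      _ ≤ R.natDegree + 1 := by
        gcongr; exact (Multiset.toFinset_card_le _).trans (card_roots' R)
      _ ≤ N := (natDegree_lt_iff_degree_lt hR).2 (mem_degreeLT.1 hRdeg)
  · rintro s ⟨rfl | hsU, hs⟩
    · exact Finset.mem_insert_self _ _
    · have hcrit := (hasDerivAt_expPoly α Q s).eq_zero_of_abs_le_of_abs_eq
        (Filter.eventually_of_mem (hU.mem_nhds hsU) hle) hs
      refine Finset.mem_insert_of_mem (Multiset.mem_toFinset.2 ((mem_roots hR).2 ?_))
      simpa [R, expPoly, Real.exp_ne_zero] using hcrit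

section ExpSpline

variable {ι : Type*} [Fintype ι] (α : ℝ) (P : ℝ[X]) (θ β : ι → ℝ)

noncomputable def expSpline (t : ℝ) : ℝ := ∑ j, β j * expPoly α P (Int.fract (t - θ j))

/-- On the arc starting at `θ ℓ`,
`expSpline α P θ β (θ ℓ + s) = expPoly α (arcPoly α P θ β ℓ) s`. -/
noncomputable def arcPoly (ℓ : ι) : ℝ[X] :=
  ∑ j, (β j * Real.exp (-α * Int.fract (θ ℓ - θ j))) • taylor (Int.fract (θ ℓ - θ j)) P

def arc (ℓ : ι) : Set ℝ := {x | 0 < x ∧ ∀ j, x + Int.fract (θ ℓ - θ j) < 1}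

variable {α P θ β}

theorem isOpen_arc (ℓ : ι) : IsOpen (arc θ ℓ) := by
  simp only [arc, Set.ofPred_and, Set.ofPred_forall]
  exact (isOpen_lt continuous_const continuous_id).inter
    (isOpen_iInter_of_finite fun j => isOpen_lt (continuous_add_const _) continuous_const)

theorem expSpline_fract (t : ℝ) : expSpline α P θ β (Int.fract t) = expSpline α P θ β t := by
  have (j : ι) : Int.fract (Int.fract t - θ j) = Int.fract (t - θ j) :=
    Int.fract_eq_fract.2 ⟨-⌊t⌋, by rw [Int.fract]; push_cast; ring⟩
  simp only [expSpline, this]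

theorem exists_abs_expSpline_le : ∃ C, ∀ t, |expSpline α P θ β t| ≤ C := by
  obtain ⟨C, hC⟩ := isCompact_Icc.exists_bound_of_continuousOn
    (continuous_expPoly α P).continuousOn (s := Set.Icc 0 1)
  refine ⟨∑ j, |β j| * C, fun t => (Finset.abs_sum_le_sum_abs _ _).trans ?_⟩
  refine Finset.sum_le_sum fun j _ => ?_
  rw [abs_mul]
  gcongr
  exact hC _ ⟨Int.fract_nonneg _, (Int.fract_lt_one _).le⟩

theorem abs_expSpline_le_of_sSup_eq {c : ℝ}
    (h : sSup ((fun t => |expSpline α P θ β t|) '' Set.Ico 0 1) = c) (t : ℝ) :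
    |expSpline α P θ β t| ≤ c := by
  obtain ⟨C, hC⟩ := exists_abs_expSpline_le (α := α) (P := P) (θ := θ) (β := β)
  rw [← expSpline_fract, ← h]
  exact le_csSup ⟨C, Set.forall_mem_image.2 fun t _ => hC t⟩
    ⟨_, ⟨Int.fract_nonneg t, Int.fract_lt_one t⟩, rfl⟩

theorem expSpline_eq_expPoly_arcPoly {t : ℝ} {ℓ : ι}
    (h : ∀ j, Int.fract (t - θ ℓ) + Int.fract (θ ℓ - θ j) < 1) :
    expSpline α P θ β t = expPoly α (arcPoly α P θ β ℓ) (Int.fract (t - θ ℓ)) := by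
  simp only [expSpline, arcPoly, expPoly, eval_finsetSum, eval_smul, smul_eq_mul, Finset.sum_mul]
  refine Finset.sum_congr rfl fun j _ => ?_
  rw [Int.fract_sub_eq_add_of_lt_one (h j), ← expPoly, expPoly_add, expPoly]
  ring

theorem abs_expPoly_arcPoly_le {c : ℝ} (hle : ∀ t, |expSpline α P θ β t| ≤ c) (ℓ : ι) :
    ∀ x ∈ arc θ ℓ, |expPoly α (arcPoly α P θ β ℓ) x| ≤ c := by
  intro x ⟨hx0, hx1⟩
  have hfract : Int.fract (θ ℓ + x - θ ℓ) = x := by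
    rw [add_sub_cancel_left, Int.fract_eq_self]
    simpa using And.intro hx0.le (hx1 ℓ)
  rw [← hfract, ← expSpline_eq_expPoly_arcPoly (by rwa [hfract])]
  exact hle _

theorem exists_finset_saturation_expSpline {N : ℕ} (hα : α ≠ 0) (hP : P ∈ degreeLT ℝ N)
    (hle : ∀ t, |expSpline α P θ β t| ≤ 1) :
    ∃ S : Finset ℝ, S.card ≤ Fintype.card ι * N ∧
      {t ∈ Set.Ico 0 1 | |expSpline α P θ β t| = 1} ⊆ S := by
  have hdeg (ℓ : ι) : arcPoly α P θ β ℓ ∈ degreeLT ℝ N :=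
    Submodule.sum_mem _ fun j _ => Submodule.smul_mem _ _ <|
      mem_degreeLT.2 <| (degree_taylor _ _).trans_lt (mem_degreeLT.1 hP)
  choose S hScard hS using fun ℓ => exists_finset_saturation_expPoly hα (hdeg ℓ)
    (isOpen_arc ℓ) (abs_expPoly_arcPoly_le hle ℓ) 0
  refine ⟨Finset.univ.biUnion fun ℓ => (S ℓ).image fun s => Int.fract (θ ℓ + s), ?_, ?_⟩
  · calc _ ≤ ∑ ℓ, ((S ℓ).image fun s => Int.fract (θ ℓ + s)).card := Finset.card_biUnion_le
      _ ≤ ∑ _ℓ : ι, N := Finset.sum_le_sum fun ℓ _ => Finset.card_image_le.trans (hScard ℓ)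
      _ = Fintype.card ι * N := by simp
  rintro t ⟨ht, hsat⟩
  have : Nonempty ι := by
    by_contra hι
    simp [expSpline, not_nonempty_iff.1 hι] at hsat
  obtain ⟨ℓ, -, hmin⟩ := Finset.univ.exists_min_image (fun j => Int.fract (t - θ j))
    Finset.univ_nonempty
  have harc (j : ι) : Int.fract (t - θ ℓ) + Int.fract (θ ℓ - θ j) < 1 :=
    Int.fract_sub_add_fract_sub_lt_one (hmin j (Finset.mem_univ j))
  have hmem : Int.fract (t - θ ℓ) ∈ insert 0 (arc θ ℓ) := by
    rcases (Int.fract_nonneg (t - θ ℓ)).eq_or_lt with h0 | hpos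
    · exact Or.inl h0.symm
    · exact Or.inr ⟨hpos, harc⟩
  refine Finset.mem_biUnion.2 ⟨ℓ, Finset.mem_univ ℓ, Finset.mem_image.2
    ⟨_, hS ℓ ⟨hmem, expSpline_eq_expPoly_arcPoly harc ▸ hsat⟩, ?_⟩⟩
  rw [Int.fract_eq_iff]
  exact ⟨ht.1, ht.2, -⌊t - θ ℓ⌋, by rw [Int.fract]; push_cast; ring⟩

end ExpSpline

theorem finitely_many_saturation_points_exponential_spline_general
    (α : ℝ) (hα : 0 < α) (N : ℕ)
    (b : ℕ → ℝ)
    (P : Polynomial ℝ)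
    (hP : P = ∑ k ∈ Finset.range N,
      Polynomial.C (b k / (Nat.factorial k : ℝ)) * Polynomial.X ^ k)
    (ψ : ℝ → ℝ)
    (hψ : ∀ r : ℝ, ψ r = P.eval (Int.fract r) * Real.exp (-α * Int.fract r))
    (L : ℕ)
    (θ : Fin L → ℝ)
    (β : Fin L → ℝ)
    (f : ℝ → ℝ) (hf : ∀ t, f t = ∑ ℓ, β ℓ * ψ (t - θ ℓ))
    (hsup : sSup ((fun t => |f t|) '' Set.Ico (0:ℝ) 1) = 1) :
    {t ∈ Set.Ico (0:ℝ) 1 | |f t| = 1}.Finite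
      ∧ {t ∈ Set.Ico (0:ℝ) 1 | |f t| = 1}.ncard ≤ L * N := by
  obtain rfl : f = expSpline α P θ β := funext fun t => by simp only [hf, hψ, expSpline, expPoly]
  have hPdeg : P ∈ degreeLT ℝ N := hP ▸ Submodule.sum_mem _ fun k hk =>
    mem_degreeLT.2 <| (degree_C_mul_X_pow_le k _).trans_lt <| by
      exact_mod_cast Finset.mem_range.1 hk
  obtain ⟨S, hScard, hsub⟩ :=
    exists_finset_saturation_expSpline hα.ne' hPdeg (abs_expSpline_le_of_sSup_eq hsup)
  refine ⟨S.finite_toSet.subset hsub, ?_⟩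
  calc _ ≤ S.card := (Set.ncard_le_ncard hsub S.finite_toSet).trans_eq (Set.ncard_coe_finset S)
    _ ≤ L * N := by simpa using hScard

/-- Let `α > 0`, `N ≥ 2`, and let `P = P_{N−1}` be the exponential-spline
polynomial built from the recursion (`b (N−1) = 1/(1 − e^{−α})`,
`b (N−k) = A·Σ_{i=1}^{k−1} b (N−k+i)/i!` with `A = e^{−α}/(1 − e^{−α})`).  Define the
1-periodic Green's function `ψ(r) = P(r − ⌊r⌋)·e^{−α(r − ⌊r⌋)}`.  Let `θ_1, …, θ_L ∈ [0,1)`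
be pairwise distinct (`L ≥ 1`), `β_ℓ ∈ ℝ`, and `f(t) = Σ_ℓ β_ℓ·ψ(t − θ_ℓ)`.
If `sup_{t ∈ [0,1)} |f t| = 1`, then the saturation set `{t ∈ [0,1) : |f t| = 1}` is
finite, of cardinality at most `L·N`. -/
theorem finitely_many_saturation_points_exponential_spline
    (α : ℝ) (hα : 0 < α) (N : ℕ) (hN : 2 ≤ N)
    (b : ℕ → ℝ)
    (hb_top : b (N - 1) = 1 / (1 - Real.exp (-α)))
    (hb_rec : ∀ k, 2 ≤ k → k ≤ N →
      b (N - k) = Real.exp (-α) / (1 - Real.exp (-α)) *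
        ∑ i ∈ Finset.Icc 1 (k - 1), b (N - k + i) / (Nat.factorial i : ℝ))
    (P : Polynomial ℝ)
    (hP : P = ∑ k ∈ Finset.range N,
      Polynomial.C (b k / (Nat.factorial k : ℝ)) * Polynomial.X ^ k)
    (ψ : ℝ → ℝ)
    (hψ : ∀ r : ℝ, ψ r = P.eval (Int.fract r) * Real.exp (-α * Int.fract r))
    (L : ℕ) (hL : 1 ≤ L)
    (θ : Fin L → ℝ) (hθmem : ∀ ℓ, θ ℓ ∈ Set.Ico (0:ℝ) 1)
    (hθinj : Function.Injective θ)
    (β : Fin L → ℝ)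
    (f : ℝ → ℝ) (hf : ∀ t, f t = ∑ ℓ, β ℓ * ψ (t - θ ℓ))
    (hsup : sSup ((fun t => |f t|) '' Set.Ico (0:ℝ) 1) = 1) :
    {t ∈ Set.Ico (0:ℝ) 1 | |f t| = 1}.Finite
      ∧ {t ∈ Set.Ico (0:ℝ) 1 | |f t| = 1}.ncard ≤ L * N :=
  finitely_many_saturation_points_exponential_spline_general α hα N b P hP ψ hψ L θ β f hf hsup
end

section
/- (Existence of a dual solution.) Let m₀ ∈ M(𝕋) and set y₀ = Φ̃(m₀) ∈ ℝ^L. Then the dual problem sup { ⟨y₀, p⟩ : p ∈ ℝ^L, ‖Φ̃*(p)‖_∞ ≤ 1 } attains its supremum: there exists p⋆ ∈ ℝ^L with ‖Φ̃*(p⋆)‖_∞ ≤ 1 such that for every p ∈ ℝ^L with ‖Φ̃*(p)‖_∞ ≤ 1 one has ⟨y₀, p⟩ ≤ ⟨y₀, p⋆⟩, where ⟨y, p⟩ = Σ_{ℓ=1}^{L} y_ℓ·p_ℓ. -/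
/-!
The objective `p ↦ ⟨y₀, p⟩` factors as `J ∘ A`, where `A p = Σ_ℓ p_ℓ φ_ℓ` and `J = ∫ · dm₀` is
linear on `C(𝕋, ℝ)`. The feasible set `{p | ‖A p‖ ≤ 1}` need not be compact (the `φ_ℓ` may be
linearly dependent), but its image is the closed unit ball of the finite-dimensional space
`range A`, which is compact; the continuous linear functional `J` attains its maximum there.
-/

open MeasureTheory

/-- Total variation norm of a finite signed measure: `‖m‖_TV = m⁺(univ) + m⁻(univ)`. -/
noncomputable def tvNorm {X : Type*} [MeasurableSpace X] (m : SignedMeasure X) : ℝ :=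
  (m.totalVariation Set.univ).toReal

/-- Pairing of a function with a signed measure: `∫ η dm = ∫ η dm⁺ − ∫ η dm⁻`. -/
noncomputable def pairing {X : Type*} [MeasurableSpace X]
    (η : X → ℝ) (m : SignedMeasure X) : ℝ :=
  (∫ x, η x ∂m.toJordanDecomposition.posPart) - ∫ x, η x ∂m.toJordanDecomposition.negPart

/-- Supremum norm `‖η‖_∞ = sup_t |η t|`. -/
noncomputable def supNorm {X : Type*} (η : X → ℝ) : ℝ :=
  sSup (Set.range fun t => |η t|)

theorem LinearMap.exists_forall_norm_le_one_le {E F : Type*} [AddCommGroup E] [Module ℝ E]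
    [FiniteDimensional ℝ E] [NormedAddCommGroup F] [NormedSpace ℝ F]
    (A : E →ₗ[ℝ] F) (J : F →ₗ[ℝ] ℝ) :
    ∃ p, ‖A p‖ ≤ 1 ∧ ∀ q, ‖A q‖ ≤ 1 → J (A q) ≤ J (A p) := by
  let S := LinearMap.range A
  have hJ : Continuous (J.comp S.subtype) := LinearMap.continuous_of_finiteDimensional _
  obtain ⟨f, hf, hmax⟩ := (ProperSpace.isCompact_closedBall (0 : S) 1).exists_isMaxOn
    ⟨0, Metric.mem_closedBall_self zero_le_one⟩ hJ.continuousOn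
  rcases f with ⟨_, p, rfl⟩
  refine ⟨p, mem_closedBall_zero_iff.mp hf, fun q hq => ?_⟩
  exact hmax (mem_closedBall_zero_iff.mpr hq : (⟨A q, q, rfl⟩ : S) ∈ _)

section Pairing

variable {X : Type*} [TopologicalSpace X] [CompactSpace X]

theorem supNorm_eq_norm (f : C(X, ℝ)) : supNorm f = ‖f‖ := by
  simp only [supNorm, ContinuousMap.norm_eq_iSup_norm, Real.norm_eq_abs, iSup]

variable [MeasurableSpace X] [OpensMeasurableSpace X]

theorem ContinuousMap.integrable_of_compactSpace (f : C(X, ℝ)) (μ : Measure X)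
    [IsFiniteMeasure μ] : Integrable f μ :=
  f.continuous.integrable_of_hasCompactSupport (.of_compactSpace _)

noncomputable def pairingLinearMap (m : SignedMeasure X) : C(X, ℝ) →ₗ[ℝ] ℝ where
  toFun f := pairing f m
  map_add' f g := by
    simp only [pairing, ContinuousMap.coe_add, Pi.add_apply]
    rw [integral_add (f.integrable_of_compactSpace _) (g.integrable_of_compactSpace _),
      integral_add (f.integrable_of_compactSpace _) (g.integrable_of_compactSpace _)]
    ring
  map_smul' c f := by
    simp only [pairing, ContinuousMap.coe_smul, Pi.smul_apply, smul_eq_mul, integral_const_mul,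
      RingHom.id_apply]
    ring

theorem pairingLinearMap_apply (m : SignedMeasure X) (f : C(X, ℝ)) :
    pairingLinearMap m f = pairing f m :=
  rfl

end Pairing

theorem exists_dual_solution_continuous_basis_pursuit_general (T : ℝ) [Fact (0 < T)]
    (L : ℕ) (φ : Fin L → AddCircle T → ℝ) (hφ : ∀ ℓ, Continuous (φ ℓ))
    (m₀ : SignedMeasure (AddCircle T)) (y₀ : Fin L → ℝ)
    (hy₀ : ∀ ℓ, pairing (φ ℓ) m₀ = y₀ ℓ) :
    ∃ pstar : Fin L → ℝ,
      supNorm (fun t => ∑ ℓ, pstar ℓ * φ ℓ t) ≤ 1 ∧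
      ∀ p : Fin L → ℝ, supNorm (fun t => ∑ ℓ, p ℓ * φ ℓ t) ≤ 1 →
        ∑ ℓ, y₀ ℓ * p ℓ ≤ ∑ ℓ, y₀ ℓ * pstar ℓ := by
  let A := Fintype.linearCombination ℝ fun ℓ => (⟨φ ℓ, hφ ℓ⟩ : C(AddCircle T, ℝ))
  have hnorm (p : Fin L → ℝ) : supNorm (fun t => ∑ ℓ, p ℓ * φ ℓ t) = ‖A p‖ := by
    rw [← supNorm_eq_norm]
    congr 1
    ext t
    simp [A, Fintype.linearCombination_apply]
  have hobj (p : Fin L → ℝ) : ∑ ℓ, y₀ ℓ * p ℓ = pairingLinearMap m₀ (A p) := by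
    simp only [A, Fintype.linearCombination_apply, map_sum, map_smul, pairingLinearMap_apply,
      ContinuousMap.coe_mk, hy₀, smul_eq_mul, mul_comm]
  obtain ⟨pstar, hpstar, hmax⟩ := A.exists_forall_norm_le_one_le (pairingLinearMap m₀)
  refine ⟨pstar, (hnorm pstar).le.trans hpstar, fun p hp => ?_⟩
  rw [hobj, hobj]
  exact hmax p ((hnorm p).ge.trans hp)

/-- **existence of a dual solution.** With continuous measurements
`φ_1, …, φ_L : 𝕋 → ℝ`, `Φ̃(m) = (∫ φ_ℓ dm)_ℓ`, `Φ̃*(p) = Σ_ℓ p_ℓ·φ_ℓ`, and data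
`y₀ = Φ̃(m₀)`, the dual problem `sup { ⟨y₀, p⟩ : ‖Φ̃*(p)‖_∞ ≤ 1 }` attains its
supremum at some `p⋆`. -/
theorem exists_dual_solution_continuous_basis_pursuit (T : ℝ) [Fact (0 < T)]
    (L : ℕ) (hL : 1 ≤ L) (φ : Fin L → AddCircle T → ℝ) (hφ : ∀ ℓ, Continuous (φ ℓ))
    (m₀ : SignedMeasure (AddCircle T)) (y₀ : Fin L → ℝ)
    (hy₀ : ∀ ℓ, pairing (φ ℓ) m₀ = y₀ ℓ) :
    ∃ pstar : Fin L → ℝ,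
      supNorm (fun t => ∑ ℓ, pstar ℓ * φ ℓ t) ≤ 1 ∧
      ∀ p : Fin L → ℝ, supNorm (fun t => ∑ ℓ, p ℓ * φ ℓ t) ≤ 1 →
        ∑ ℓ, y₀ ℓ * p ℓ ≤ ∑ ℓ, y₀ ℓ * pstar ℓ :=
  exists_dual_solution_continuous_basis_pursuit_general T L φ hφ m₀ y₀ hy₀
end

section
/- (Strong duality.) Let m₀ ∈ M(𝕋) and set y₀ = Φ̃(m₀) ∈ ℝ^L. Then the optimal values of the primal and dual problems coincide: inf { ‖m‖_TV : m ∈ M(𝕋), Φ̃(m) = y₀ } = sup { ⟨y₀, p⟩ : p ∈ ℝ^L, ‖Φ̃*(p)‖_∞ ≤ 1 }, where ⟨y, p⟩ = Σ_{ℓ=1}^{L} y_ℓ·p_ℓ. -/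
/-!
Weak duality is `⟨y₀, p⟩ = ∫ Φ̃*p dm ≤ ‖Φ̃*p‖_∞ ‖m‖_TV`. Conversely, the measures `±δ_t` show that
the convex hull `K` of the compact set `{±Φ̃(δ_t)}` lies in the image under `Φ̃` of the unit ball of
`M(𝕋)`, and `K` is compact by Carathéodory's theorem. So if `d > 0` is below the primal value, then
`y₀ / d ∉ K`, and a hyperplane strictly separating `y₀ / d` from `K` is, after rescaling, a dual
feasible `p` with `⟨y₀, p⟩ > d`.
-/

open MeasureTheory

open Set

section ConvexHull

variable {E : Type*} [AddCommGroup E] [Module ℝ E] [FiniteDimensional ℝ E]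

lemma convexHull_eq_iUnion_image_stdSimplex (s : Set E) :
    convexHull ℝ s = ⋃ k : Fin (Module.finrank ℝ E + 2),
      (fun q : (Fin k → ℝ) × (Fin k → E) => ∑ j, q.1 j • q.2 j) ''
        (stdSimplex ℝ (Fin k) ×ˢ univ.pi fun _ => s) := by
  refine subset_antisymm (fun x hx => ?_) (iUnion_subset fun k => ?_)
  · obtain ⟨ι, _, z, w, hzs, hz, hw, hw1, rfl⟩ := eq_pos_convex_span_of_mem_convexHull hx
    have hcard : Fintype.card ι < Module.finrank ℝ E + 2 :=
      Nat.lt_succ_of_le (hz.card_le_finrank_succ.trans (by gcongr; exact Submodule.finrank_le _))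
    let e := Fintype.equivFin ι
    refine mem_iUnion.2 ⟨⟨_, hcard⟩, (w ∘ e.symm, z ∘ e.symm),
      ⟨⟨fun j => (hw _).le, ?_⟩, fun j _ => hzs (mem_range_self _)⟩, ?_⟩
    · rw [← hw1]; exact e.symm.sum_comp w
    · exact e.symm.sum_comp fun i => w i • z i
  · rintro _ ⟨⟨w, z⟩, ⟨hw, hz⟩, rfl⟩
    exact (convex_convexHull ℝ s).sum_mem (fun j _ => hw.1 j) hw.2
      fun j _ => subset_convexHull ℝ s (hz j (mem_univ j))

theorem IsCompact.convexHull [TopologicalSpace E] [ContinuousAdd E] [ContinuousSMul ℝ E]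
    {s : Set E} (hs : IsCompact s) : IsCompact (convexHull ℝ s) := by
  rw [convexHull_eq_iUnion_image_stdSimplex]
  exact isCompact_iUnion fun k => ((isCompact_stdSimplex ℝ _).prod
    (isCompact_univ_pi fun _ => hs)).image (by fun_prop)

end ConvexHull

lemma exists_dotProduct_lt_of_notMem {ι : Type*} [Fintype ι] {C : Set (ι → ℝ)}
    (hconv : Convex ℝ C) (hclosed : IsClosed C) {y : ι → ℝ} (hy : y ∉ C) :
    ∃ (p : ι → ℝ) (u : ℝ), (∀ c ∈ C, c ⬝ᵥ p < u) ∧ u < y ⬝ᵥ p := by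
  classical
  obtain ⟨f, u, hC, hu⟩ := geometric_hahn_banach_closed_point hconv hclosed hy
  have hf : ∀ c, f c = c ⬝ᵥ fun i => f (Pi.single i 1) := fun c => by
    conv_lhs => rw [← Finset.univ_sum_single c]
    simp only [map_sum, dotProduct]
    refine Finset.sum_congr rfl fun i _ => ?_
    rw [← smul_eq_mul, ← _root_.map_smul, ← Pi.single_smul, smul_eq_mul, mul_one]
  exact ⟨_, u, fun c hc => hf c ▸ hC c hc, hf y ▸ hu⟩

lemma supNorm_le {X : Type*} {η : X → ℝ} {c : ℝ} (hc : 0 ≤ c) (h : ∀ t, |η t| ≤ c) :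
    supNorm η ≤ c :=
  Real.sSup_le (forall_mem_range.2 h) hc

section Topological

variable {X : Type*} [TopologicalSpace X] [CompactSpace X] {ι : Type*}

lemma abs_le_supNorm {η : X → ℝ} (hη : Continuous η) (t : X) : |η t| ≤ supNorm η :=
  le_csSup (isCompact_range hη.abs).bddAbove ⟨t, rfl⟩

/-- The vectors `±Φ̃(δ_t)`, `t ∈ X`. -/
def signedAtoms (φ : ι → C(X, ℝ)) : Set (ι → ℝ) :=
  range (fun t i => φ i t) ∪ -range (fun t i => φ i t)

lemma isCompact_signedAtoms (φ : ι → C(X, ℝ)) : IsCompact (signedAtoms φ) :=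
  (isCompact_range (by fun_prop)).union (isCompact_range (by fun_prop)).neg

lemma exists_dual_one_lt_of_notMem [Nonempty X] [Fintype ι] (φ : ι → C(X, ℝ)) {y : ι → ℝ}
    (hy : y ∉ convexHull ℝ (signedAtoms φ)) :
    ∃ p, supNorm (fun t => ∑ i, p i * φ i t) ≤ 1 ∧ 1 < y ⬝ᵥ p := by
  obtain ⟨q, u, hK, hu⟩ := exists_dotProduct_lt_of_notMem (convex_convexHull ℝ _)
    (isCompact_signedAtoms φ).convexHull.isClosed hy
  have hq : ∀ t, |∑ i, q i * φ i t| < u := fun t => by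
    have h₁ := hK _ (subset_convexHull ℝ _ (Or.inl ⟨t, rfl⟩))
    have h₂ := hK _ (subset_convexHull ℝ _ (Or.inr ⟨t, (neg_neg _).symm⟩))
    rw [neg_dotProduct, dotProduct_comm] at h₂
    rw [dotProduct_comm] at h₁
    dsimp only [dotProduct] at h₁ h₂
    exact abs_lt.2 ⟨by linarith, h₁⟩
  have hu₀ : 0 < u := (abs_nonneg _).trans_lt (hq (Classical.arbitrary X))
  refine ⟨u⁻¹ • q, supNorm_le zero_le_one fun t => ?_, ?_⟩
  · simp only [Pi.smul_apply, smul_eq_mul, mul_assoc, ← Finset.mul_sum]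
    rw [abs_mul, abs_of_pos (inv_pos.2 hu₀), inv_mul_le_iff₀ hu₀, mul_one]
    exact (hq t).le
  · rwa [dotProduct_smul, smul_eq_mul, ← div_eq_inv_mul, one_lt_div hu₀]

end Topological

section Measurable

variable {X : Type*} [MeasurableSpace X]

instance SignedMeasure.isFiniteMeasure_variation (m : SignedMeasure X) :
    IsFiniteMeasure m.variation := by
  rw [← SignedMeasure.totalVariation_eq_variation]; infer_instance

lemma tvNorm_eq_variation_real (m : SignedMeasure X) : tvNorm m = m.variation.real univ := by
  rw [tvNorm, SignedMeasure.totalVariation_eq_variation, measureReal_def]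

lemma tvNorm_nonneg (m : SignedMeasure X) : 0 ≤ tvNorm m := ENNReal.toReal_nonneg

lemma tvNorm_add_le (m m' : SignedMeasure X) : tvNorm (m + m') ≤ tvNorm m + tvNorm m' := by
  simp only [tvNorm_eq_variation_real, measureReal_def]
  rw [← ENNReal.toReal_add (by finiteness) (by finiteness)]
  exact ENNReal.toReal_mono (by finiteness) (VectorMeasure.variation_add_le univ)

lemma tvNorm_smul (c : ℝ) (m : SignedMeasure X) : tvNorm (c • m) = |c| * tvNorm m := by
  simp [tvNorm_eq_variation_real, VectorMeasure.variation_smul, measureReal_def]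

lemma tvNorm_dirac (t : X) (c : ℝ) :
    tvNorm (VectorMeasure.dirac t c : SignedMeasure X) = |c| := by
  simp [tvNorm_eq_variation_real, measureReal_def]

lemma convex_setOf_tvNorm_le (r : ℝ) : Convex ℝ {m : SignedMeasure X | tvNorm m ≤ r} := by
  intro m hm m' hm' a b ha hb hab
  calc tvNorm (a • m + b • m') ≤ a * tvNorm m + b * tvNorm m' := by
        grw [tvNorm_add_le, tvNorm_smul, tvNorm_smul, abs_of_nonneg ha, abs_of_nonneg hb]
    _ ≤ a * r + b * r := by gcongr; exacts [hm, hm']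
    _ = r := by rw [← add_mul, hab, one_mul]

lemma pairing_eq_integral {η : X → ℝ} {m : SignedMeasure X} (hη : Integrable η m.variation) :
    pairing η m = ∫ᵛ x, η x ∂<•m := by
  rw [← SignedMeasure.totalVariation_eq_variation] at hη
  conv_rhs =>
    rw [← m.toSignedMeasure_toJordanDecomposition, JordanDecomposition.toSignedMeasure]
  rw [VectorMeasure.integral_sub_vectorMeasure
      (by rw [VectorMeasure.Integrable, Measure.variation_toSignedMeasure]
          exact hη.left_of_add_measure)
      (by rw [VectorMeasure.Integrable, Measure.variation_toSignedMeasure]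
          exact hη.right_of_add_measure),
    VectorMeasure.integral_toSignedMeasure, VectorMeasure.integral_toSignedMeasure, pairing]

lemma abs_integral_le_mul_tvNorm {η : X → ℝ} {C : ℝ} (hC : ∀ x, |η x| ≤ C)
    (m : SignedMeasure X) : |∫ᵛ x, η x ∂<•m| ≤ C * tvNorm m := by
  have hB : ‖(ContinuousLinearMap.lsmul ℝ ℝ : ℝ →L[ℝ] ℝ →L[ℝ] ℝ).flip‖ = 1 := by
    rw [ContinuousLinearMap.opNorm_flip, ContinuousLinearMap.opNorm_lsmul]
  simpa [hB, tvNorm_eq_variation_real] using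
    VectorMeasure.norm_integral_le_of_norm_le_const
      (B := (ContinuousLinearMap.lsmul ℝ ℝ).flip) (μ := m) (f := η) (.of_forall hC)

end Measurable

section Compact

variable {X : Type*} [TopologicalSpace X] [CompactSpace X] [MeasurableSpace X]
  [OpensMeasurableSpace X] {ι : Type*}

lemma integrable_variation_of_continuous {η : X → ℝ} (hη : Continuous η)
    (m : SignedMeasure X) : Integrable η m.variation :=
  hη.integrable_of_hasCompactSupport (.of_compactSpace η)

lemma abs_pairing_le_supNorm_mul_tvNorm {η : X → ℝ} (hη : Continuous η)
    (m : SignedMeasure X) : |pairing η m| ≤ supNorm η * tvNorm m := by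
  rw [pairing_eq_integral (integrable_variation_of_continuous hη m)]
  exact abs_integral_le_mul_tvNorm (abs_le_supNorm hη) m

lemma pairing_add {η : X → ℝ} (hη : Continuous η) (m m' : SignedMeasure X) :
    pairing η (m + m') = pairing η m + pairing η m' := by
  simp only [pairing_eq_integral (integrable_variation_of_continuous hη _)]
  exact VectorMeasure.integral_add_vectorMeasure (integrable_variation_of_continuous hη _)
    (integrable_variation_of_continuous hη _)

lemma pairing_smul {η : X → ℝ} (hη : Continuous η) (c : ℝ) (m : SignedMeasure X) :
    pairing η (c • m) = c * pairing η m := by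
  simp only [pairing_eq_integral (integrable_variation_of_continuous hη _)]
  exact VectorMeasure.integral_smul_vectorMeasure _ c

lemma pairing_sum_mul [Fintype ι] (φ : ι → C(X, ℝ)) (p : ι → ℝ) (m : SignedMeasure X) :
    pairing (fun t => ∑ i, p i * φ i t) m = ∑ i, p i * pairing (φ i) m := by
  have hcont : Continuous fun t => ∑ i, p i * φ i t := by fun_prop
  simp only [pairing_eq_integral (integrable_variation_of_continuous hcont m),
    pairing_eq_integral (integrable_variation_of_continuous (φ _).continuous m)]
  rw [VectorMeasure.integral_finsetSum _
    fun i _ => integrable_variation_of_continuous (by fun_prop) m]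
  simp only [← smul_eq_mul, VectorMeasure.integral_fun_smul]

/-- The measurement operator `Φ̃`. -/
noncomputable def measurementMap (φ : ι → C(X, ℝ)) : SignedMeasure X →ₗ[ℝ] ι → ℝ where
  toFun m i := pairing (φ i) m
  map_add' m m' := funext fun i => pairing_add (φ i).continuous m m'
  map_smul' c m := funext fun i => pairing_smul (φ i).continuous c m

lemma measurementMap_apply (φ : ι → C(X, ℝ)) (m : SignedMeasure X) (i : ι) :
    measurementMap φ m i = pairing (φ i) m := rfl

lemma measurementMap_dirac (φ : ι → C(X, ℝ)) (t : X) (c : ℝ) :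
    measurementMap φ (VectorMeasure.dirac t c) = c • fun i => φ i t := by
  ext i
  rw [measurementMap_apply,
    pairing_eq_integral (integrable_variation_of_continuous (φ i).continuous _),
    VectorMeasure.integral_dirac' (φ i).continuous.stronglyMeasurable]
  simp

lemma dotProduct_le_tvNorm [Fintype ι] {φ : ι → C(X, ℝ)} {p : ι → ℝ}
    (hp : supNorm (fun t => ∑ i, p i * φ i t) ≤ 1) (m : SignedMeasure X) :
    measurementMap φ m ⬝ᵥ p ≤ tvNorm m :=
  calc measurementMap φ m ⬝ᵥ p = pairing (fun t => ∑ i, p i * φ i t) m := by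
        rw [pairing_sum_mul, dotProduct_comm]; rfl
    _ ≤ supNorm (fun t => ∑ i, p i * φ i t) * tvNorm m :=
        (le_abs_self _).trans (abs_pairing_le_supNorm_mul_tvNorm (by fun_prop) m)
    _ ≤ tvNorm m := mul_le_of_le_one_left (tvNorm_nonneg m) hp

lemma convexHull_signedAtoms_subset (φ : ι → C(X, ℝ)) :
    convexHull ℝ (signedAtoms φ) ⊆ measurementMap φ '' {m | tvNorm m ≤ 1} := by
  refine convexHull_min (union_subset ?_ ?_) ((convex_setOf_tvNorm_le 1).linear_image _)
  · rintro _ ⟨t, rfl⟩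
    exact ⟨VectorMeasure.dirac t 1, by simp [tvNorm_dirac], by simp [measurementMap_dirac]⟩
  · rintro y ⟨t, hy⟩
    refine ⟨VectorMeasure.dirac t (-1), by simp [tvNorm_dirac], ?_⟩
    rw [measurementMap_dirac, neg_one_smul]
    exact neg_eq_iff_eq_neg.2 hy

lemma exists_measurementMap_eq_of_inv_smul_mem {φ : ι → C(X, ℝ)} {d : ℝ} (hd : 0 < d)
    {y : ι → ℝ} (hy : d⁻¹ • y ∈ convexHull ℝ (signedAtoms φ)) :
    ∃ m, measurementMap φ m = y ∧ tvNorm m ≤ d := by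
  obtain ⟨m, hm, hmy⟩ := convexHull_signedAtoms_subset φ hy
  refine ⟨d • m, by rw [map_smul, hmy, smul_inv_smul₀ hd.ne'], ?_⟩
  rw [tvNorm_smul, abs_of_pos hd]
  exact mul_le_of_le_one_right hd.le hm

end Compact

theorem sInf_tvNorm_eq_sSup_dual {X : Type*} [TopologicalSpace X] [CompactSpace X]
    [Nonempty X] [MeasurableSpace X] [OpensMeasurableSpace X] {ι : Type*} [Fintype ι]
    (φ : ι → C(X, ℝ)) (m₀ : SignedMeasure X) (y : ι → ℝ) (hy : ∀ i, pairing (φ i) m₀ = y i) :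
    sInf {x : ℝ | ∃ m : SignedMeasure X, (∀ i, pairing (φ i) m = y i) ∧ tvNorm m = x}
      = sSup {x : ℝ | ∃ p : ι → ℝ,
          supNorm (fun t => ∑ i, p i * φ i t) ≤ 1 ∧ ∑ i, y i * p i = x} := by
  set P := {x : ℝ | ∃ m : SignedMeasure X, (∀ i, pairing (φ i) m = y i) ∧ tvNorm m = x}
  set D :=
    {x : ℝ | ∃ p : ι → ℝ, supNorm (fun t => ∑ i, p i * φ i t) ≤ 1 ∧ ∑ i, y i * p i = x}
  have weak : ∀ a ∈ D, ∀ b ∈ P, a ≤ b := by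
    rintro _ ⟨p, hp, rfl⟩ _ ⟨m, hm, rfl⟩
    exact (funext hm : measurementMap φ m = y) ▸ dotProduct_le_tvNorm hp m
  have hP : tvNorm m₀ ∈ P := ⟨m₀, hy, rfl⟩
  have hD : (0 : ℝ) ∈ D := ⟨0, supNorm_le zero_le_one (by simp), by simp⟩
  have hDbdd : BddAbove D := ⟨tvNorm m₀, fun a ha => weak a ha _ hP⟩
  refine le_antisymm (le_of_forall_lt_imp_le_of_dense fun d hd => ?_)
    (csSup_le ⟨0, hD⟩ fun a ha => le_csInf ⟨_, hP⟩ (weak a ha))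
  rcases le_or_gt d 0 with hd0 | hd0
  · exact hd0.trans (le_csSup hDbdd hD)
  have hy' : d⁻¹ • y ∉ convexHull ℝ (signedAtoms φ) := fun hmem => by
    obtain ⟨m, hm, hmd⟩ := exists_measurementMap_eq_of_inv_smul_mem hd0 hmem
    have hPbdd : BddBelow P := ⟨0, by rintro _ ⟨m, -, rfl⟩; exact tvNorm_nonneg m⟩
    exact hd.not_ge ((csInf_le hPbdd ⟨m, congrFun hm, rfl⟩).trans hmd)
  obtain ⟨p, hp, hp1⟩ := exists_dual_one_lt_of_notMem φ hy'
  rw [smul_dotProduct, smul_eq_mul, ← div_eq_inv_mul, one_lt_div hd0] at hp1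
  exact hp1.le.trans (le_csSup hDbdd ⟨p, hp, rfl⟩)

theorem strong_duality_continuous_basis_pursuit_general (T : ℝ) [Fact (0 < T)]
    (L : ℕ) (φ : Fin L → AddCircle T → ℝ) (hφ : ∀ ℓ, Continuous (φ ℓ))
    (m₀ : SignedMeasure (AddCircle T)) (y₀ : Fin L → ℝ)
    (hy₀ : ∀ ℓ, pairing (φ ℓ) m₀ = y₀ ℓ) :
    sInf {x : ℝ | ∃ m : SignedMeasure (AddCircle T),
        (∀ ℓ, pairing (φ ℓ) m = y₀ ℓ) ∧ tvNorm m = x}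
      = sSup {x : ℝ | ∃ p : Fin L → ℝ,
          supNorm (fun t => ∑ ℓ, p ℓ * φ ℓ t) ≤ 1 ∧ ∑ ℓ, y₀ ℓ * p ℓ = x} :=
  sInf_tvNorm_eq_sSup_dual (fun ℓ => ⟨φ ℓ, hφ ℓ⟩) m₀ y₀ hy₀

/-- **strong duality.** With continuous measurements
`φ_1, …, φ_L : 𝕋 → ℝ`, `Φ̃(m) = (∫ φ_ℓ dm)_ℓ`, `Φ̃*(p) = Σ_ℓ p_ℓ·φ_ℓ`, and data
`y₀ = Φ̃(m₀)`, the primal and dual optimal values coincide: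
`inf { ‖m‖_TV : Φ̃(m) = y₀ } = sup { ⟨y₀, p⟩ : ‖Φ̃*(p)‖_∞ ≤ 1 }`. -/
theorem strong_duality_continuous_basis_pursuit (T : ℝ) [Fact (0 < T)]
    (L : ℕ) (hL : 1 ≤ L) (φ : Fin L → AddCircle T → ℝ) (hφ : ∀ ℓ, Continuous (φ ℓ))
    (m₀ : SignedMeasure (AddCircle T)) (y₀ : Fin L → ℝ)
    (hy₀ : ∀ ℓ, pairing (φ ℓ) m₀ = y₀ ℓ) :
    sInf {x : ℝ | ∃ m : SignedMeasure (AddCircle T),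
        (∀ ℓ, pairing (φ ℓ) m = y₀ ℓ) ∧ tvNorm m = x}
      = sSup {x : ℝ | ∃ p : Fin L → ℝ,
          supNorm (fun t => ∑ ℓ, p ℓ * φ ℓ t) ≤ 1 ∧ ∑ ℓ, y₀ ℓ * p ℓ = x} :=
  strong_duality_continuous_basis_pursuit_general T L φ hφ m₀ y₀ hy₀
end

section
/- (Existence of a primal solution.) Let m₀ ∈ M(𝕋) and set y₀ = Φ̃(m₀) ∈ ℝ^L. Then the primal problem min { ‖m‖_TV : m ∈ M(𝕋), Φ̃(m) = y₀ } admits a solution: there exists m⋆ ∈ M(𝕋) with Φ̃(m⋆) = y₀ such that ‖m⋆‖_TV ≤ ‖m‖_TV for every m ∈ M(𝕋) with Φ̃(m) = y₀. -/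
/-!
Direct method in the weak topology. A signed measure `m` is recorded by its Jordan pair
`(m⁺, m⁻)` of finite measures, whose total mass is `‖m‖_TV`; conversely a pair `(μ, ν)` of
finite measures gives `μ - ν`, with the same measurements and `‖μ - ν‖_TV ≤ μ(𝕋) + ν(𝕋)`.
On the compact space `𝕋` the measurements are weakly continuous in `(μ, ν)` and the sublevel
sets of the total mass are weakly compact (Prokhorov), so the total mass attains its minimum on
the closed set of feasible pairs, and the difference of a minimising pair is a primal solution.
-/

open MeasureTheory

open Set Filter
open scoped NNReal

namespace MeasureTheory.SignedMeasure

variable {X : Type*} [MeasurableSpace X]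

lemma toJordanDecomposition_posPart_add_eq (μ ν : Measure X) [IsFiniteMeasure μ]
    [IsFiniteMeasure ν] :
    (μ.toSignedMeasure - ν.toSignedMeasure).toJordanDecomposition.posPart + ν
      = (μ.toSignedMeasure - ν.toSignedMeasure).toJordanDecomposition.negPart + μ := by
  have hjordan := (μ.toSignedMeasure - ν.toSignedMeasure).toSignedMeasure_toJordanDecomposition
  rw [JordanDecomposition.toSignedMeasure, sub_eq_sub_iff_add_eq_add] at hjordan
  rw [← Measure.toSignedMeasure_eq_toSignedMeasure_iff, Measure.toSignedMeasure_add,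
    Measure.toSignedMeasure_add, hjordan, add_comm]

noncomputable def jordanPair (m : SignedMeasure X) : FiniteMeasure X × FiniteMeasure X :=
  (⟨m.toJordanDecomposition.posPart, inferInstance⟩,
    ⟨m.toJordanDecomposition.negPart, inferInstance⟩)

end MeasureTheory.SignedMeasure

section

variable {X : Type*} [MeasurableSpace X]

lemma integral_sub_integral_jordanPair (η : X → ℝ) (m : SignedMeasure X) :
    ∫ x, η x ∂m.jordanPair.1.toMeasure - ∫ x, η x ∂m.jordanPair.2.toMeasure = pairing η m :=
  rfl

lemma tvNorm_toSignedMeasure_sub_le (μ ν : Measure X) [IsFiniteMeasure μ]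
    [IsFiniteMeasure ν] :
    tvNorm (μ.toSignedMeasure - ν.toSignedMeasure) ≤ μ.real univ + ν.real univ := by
  have hvar :=
    VectorMeasure.variation_sub_le (μ := μ.toSignedMeasure) (ν := ν.toSignedMeasure)
  rw [Measure.variation_toSignedMeasure, Measure.variation_toSignedMeasure] at hvar
  rw [tvNorm, SignedMeasure.totalVariation_eq_variation, measureReal_def, measureReal_def,
    ← ENNReal.toReal_add (measure_ne_top _ _) (measure_ne_top _ _)]
  exact ENNReal.toReal_mono (by finiteness) (hvar univ)

lemma tvNorm_eq_mass_add_mass_jordanPair (m : SignedMeasure X) :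
    tvNorm m = m.jordanPair.1.mass + m.jordanPair.2.mass := by
  rw [tvNorm, SignedMeasure.totalVariation, Measure.add_apply,
    ENNReal.toReal_add (measure_ne_top _ _) (measure_ne_top _ _)]
  rfl

lemma pairing_toSignedMeasure_sub [TopologicalSpace X] [OpensMeasurableSpace X]
    [CompactSpace X] {η : X → ℝ} (hη : Continuous η) (μ ν : Measure X) [IsFiniteMeasure μ]
    [IsFiniteMeasure ν] :
    pairing η (μ.toSignedMeasure - ν.toSignedMeasure) = ∫ x, η x ∂μ - ∫ x, η x ∂ν := by
  have hint : ∀ (ρ : Measure X) [IsFiniteMeasure ρ], Integrable η ρ := fun ρ _ ↦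
    hη.integrable_of_hasCompactSupport (.of_compactSpace η)
  have h := congrArg (fun ρ ↦ ∫ x, η x ∂ρ)
    (SignedMeasure.toJordanDecomposition_posPart_add_eq μ ν)
  simp only [integral_add_measure (hint _) (hint _)] at h
  rw [pairing]
  linarith

end

namespace MeasureTheory.FiniteMeasure

variable {X : Type*} [MeasurableSpace X] [TopologicalSpace X]

lemma isClosed_setOf_integral_sub_integral_eq [OpensMeasurableSpace X] [CompactSpace X]
    {ι : Type*} {φ : ι → X → ℝ} (hφ : ∀ i, Continuous (φ i)) (y : ι → ℝ) :
    IsClosed {p : FiniteMeasure X × FiniteMeasure X |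
      ∀ i, ∫ x, φ i x ∂p.1.toMeasure - ∫ x, φ i x ∂p.2.toMeasure = y i} := by
  simp only [ofPred_forall]
  refine isClosed_iInter fun i ↦ isClosed_eq ?_ continuous_const
  have hcont := continuous_integral_continuousMap (X := X) (⟨φ i, hφ i⟩ : C(X, ℝ))
  exact (hcont.comp continuous_fst).sub (hcont.comp continuous_snd)

variable [T2Space X] [BorelSpace X] [CompactSpace X]

lemma isCompact_setOf_mass_add_mass_le (C : ℝ≥0) :
    IsCompact {p : FiniteMeasure X × FiniteMeasure X | p.1.mass + p.2.mass ≤ C} := by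
  have hK := isCompact_setOfPred_finiteMeasure_le_of_compactSpace X C
  refine (hK.prod hK).of_isClosed_subset (isClosed_le (by fun_prop) continuous_const) ?_
  exact fun p (hp : p.1.mass + p.2.mass ≤ C) ↦ ⟨le_self_add.trans hp, le_add_self.trans hp⟩

lemma exists_isMinOn_mass_add_mass {F : Set (FiniteMeasure X × FiniteMeasure X)}
    (hF : IsClosed F) (hne : F.Nonempty) :
    ∃ p ∈ F,
      IsMinOn (fun p : FiniteMeasure X × FiniteMeasure X ↦ p.1.mass + p.2.mass) F p := by
  obtain ⟨p₀, hp₀⟩ := hne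
  refine ContinuousOn.exists_isMinOn' (by fun_prop) hF hp₀ (mem_inf_of_left ?_)
  refine mem_of_superset
    (isCompact_setOf_mass_add_mass_le (p₀.1.mass + p₀.2.mass)).compl_mem_cocompact ?_
  exact fun p (hp : ¬ p.1.mass + p.2.mass ≤ p₀.1.mass + p₀.2.mass) ↦ (not_le.mp hp).le

end MeasureTheory.FiniteMeasure

theorem exists_primal_solution_continuous_basis_pursuit_general (T : ℝ) [Fact (0 < T)]
    (L : ℕ) (φ : Fin L → AddCircle T → ℝ) (hφ : ∀ ℓ, Continuous (φ ℓ))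
    (m₀ : SignedMeasure (AddCircle T)) (y₀ : Fin L → ℝ)
    (hy₀ : ∀ ℓ, pairing (φ ℓ) m₀ = y₀ ℓ) :
    ∃ mstar : SignedMeasure (AddCircle T),
      (∀ ℓ, pairing (φ ℓ) mstar = y₀ ℓ) ∧
      ∀ m : SignedMeasure (AddCircle T),
        (∀ ℓ, pairing (φ ℓ) m = y₀ ℓ) → tvNorm mstar ≤ tvNorm m := by
  have jordanPair_feasible : ∀ m : SignedMeasure (AddCircle T),
      (∀ ℓ, pairing (φ ℓ) m = y₀ ℓ) → ∀ ℓ,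
        ∫ x, φ ℓ x ∂m.jordanPair.1.toMeasure - ∫ x, φ ℓ x ∂m.jordanPair.2.toMeasure = y₀ ℓ :=
    fun m hm ℓ ↦ (integral_sub_integral_jordanPair (φ ℓ) m).trans (hm ℓ)
  obtain ⟨p, hp, hmin⟩ := FiniteMeasure.exists_isMinOn_mass_add_mass
    (FiniteMeasure.isClosed_setOf_integral_sub_integral_eq hφ y₀)
    ⟨m₀.jordanPair, jordanPair_feasible m₀ hy₀⟩
  refine ⟨p.1.toMeasure.toSignedMeasure - p.2.toMeasure.toSignedMeasure,
    fun ℓ ↦ (pairing_toSignedMeasure_sub (hφ ℓ) _ _).trans (hp ℓ), fun m hm ↦ ?_⟩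
  calc tvNorm (p.1.toMeasure.toSignedMeasure - p.2.toMeasure.toSignedMeasure)
      ≤ p.1.mass + p.2.mass := tvNorm_toSignedMeasure_sub_le p.1.toMeasure p.2.toMeasure
    _ ≤ m.jordanPair.1.mass + m.jordanPair.2.mass := by
      exact_mod_cast hmin (jordanPair_feasible m hm)
    _ = tvNorm m := (tvNorm_eq_mass_add_mass_jordanPair m).symm

/-- **existence of a primal solution.** With continuous measurements
`φ_1, …, φ_L : 𝕋 → ℝ`, `Φ̃(m) = (∫ φ_ℓ dm)_ℓ`, and data `y₀ = Φ̃(m₀)`, the primal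
problem `min { ‖m‖_TV : Φ̃(m) = y₀ }` admits a solution `m⋆`. -/
theorem exists_primal_solution_continuous_basis_pursuit (T : ℝ) [Fact (0 < T)]
    (L : ℕ) (hL : 1 ≤ L) (φ : Fin L → AddCircle T → ℝ) (hφ : ∀ ℓ, Continuous (φ ℓ))
    (m₀ : SignedMeasure (AddCircle T)) (y₀ : Fin L → ℝ)
    (hy₀ : ∀ ℓ, pairing (φ ℓ) m₀ = y₀ ℓ) :
    ∃ mstar : SignedMeasure (AddCircle T),
      (∀ ℓ, pairing (φ ℓ) mstar = y₀ ℓ) ∧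
      ∀ m : SignedMeasure (AddCircle T),
        (∀ ℓ, pairing (φ ℓ) m = y₀ ℓ) → tvNorm mstar ≤ tvNorm m :=
  exists_primal_solution_continuous_basis_pursuit_general T L φ hφ m₀ y₀ hy₀
end

section
/- (Saturation of solutions: support inclusion.) Let m ∈ M(𝕋) and let η : 𝕋 → ℝ be continuous with ‖η‖_∞ ≤ 1 and ∫ η dm = ‖m‖_TV. Then the Jordan positive part m⁺ is concentrated on the set { t ∈ 𝕋 : η(t) = 1 } (that is, m⁺ of the complement of this set is 0) and the Jordan negative part m⁻ is concentrated on { t ∈ 𝕋 : η(t) = −1 }. In particular the signed support of m is contained in the signed saturation set of η. -/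
open MeasureTheory

/-!
Since `|η| ≤ 1`, we have `∫ η dm⁺ ≤ m⁺(𝕋)` and `-∫ η dm⁻ ≤ m⁻(𝕋)`; the certificate
`∫ η dm = ‖m‖_TV` says that the sum of these two inequalities is an equality, so both are.
An integral of `f ≤ c` against a finite measure equals `c` times the total mass only if
`f = c` almost everywhere, which gives `η = 1` a.e. for `m⁺` and `η = -1` a.e. for `m⁻`.
-/

theorem abs_le_of_supNorm_le {X : Type*} [TopologicalSpace X] [CompactSpace X] {η : X → ℝ}
    (hη : Continuous η) {C : ℝ} (h : supNorm η ≤ C) (t : X) : |η t| ≤ C :=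
  (le_csSup (isCompact_range hη.abs).bddAbove ⟨t, rfl⟩).trans h

theorem tvNorm_eq_posPart_add_negPart {X : Type*} [MeasurableSpace X] (m : SignedMeasure X) :
    tvNorm m = m.toJordanDecomposition.posPart.real Set.univ
      + m.toJordanDecomposition.negPart.real Set.univ := by
  rw [tvNorm, SignedMeasure.totalVariation, Measure.coe_add, Pi.add_apply,
    ENNReal.toReal_add (measure_ne_top _ _) (measure_ne_top _ _), measureReal_def,
    measureReal_def]

section IntegralOfBoundedFunction

variable {X : Type*} [MeasurableSpace X] {μ : Measure X} [IsFiniteMeasure μ] {f : X → ℝ} {c : ℝ}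

theorem integral_le_measureReal_univ_mul (hf : Integrable f μ) (hle : ∀ᵐ x ∂μ, f x ≤ c) :
    ∫ x, f x ∂μ ≤ μ.real Set.univ * c := by
  simpa only [integral_const, smul_eq_mul] using integral_mono_ae hf (integrable_const c) hle

theorem measure_compl_setOf_eq_eq_zero_of_integral_eq (hf : Integrable f μ)
    (hle : ∀ᵐ x ∂μ, f x ≤ c) (h : ∫ x, f x ∂μ = μ.real Set.univ * c) :
    μ {x | f x = c}ᶜ = 0 := by
  have hae : f =ᵐ[μ] fun _ ↦ c := by
    rwa [← integral_eq_iff_of_ae_le hf (integrable_const c) hle, integral_const, smul_eq_mul]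
  exact ae_iff.mp hae

end IntegralOfBoundedFunction

/-- **saturation of solutions: support inclusion.** Let `m ∈ M(𝕋)` and
let `η : 𝕋 → ℝ` be continuous with `‖η‖_∞ ≤ 1` and `∫ η dm = ‖m‖_TV`.  Then the Jordan
positive part `m⁺` is concentrated on `{η = 1}` and the negative part `m⁻` is
concentrated on `{η = −1}`. -/
theorem jordan_parts_concentrated_on_saturation (T : ℝ) [Fact (0 < T)]
    (m : SignedMeasure (AddCircle T)) (η : AddCircle T → ℝ) (hη : Continuous η)
    (hηnorm : supNorm η ≤ 1) (hcert : pairing η m = tvNorm m) :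
    m.toJordanDecomposition.posPart {t | η t = 1}ᶜ = 0
      ∧ m.toJordanDecomposition.negPart {t | η t = -1}ᶜ = 0 := by
  set μ := m.toJordanDecomposition.posPart
  set ν := m.toJordanDecomposition.negPart
  have hbound t : |η t| ≤ 1 := abs_le_of_supNorm_le hη hηnorm t
  have hle : ∀ᵐ t ∂μ, η t ≤ 1 := .of_forall fun t ↦ (abs_le.mp (hbound t)).2
  have hle_neg : ∀ᵐ t ∂ν, -η t ≤ 1 := .of_forall fun t ↦ neg_le.mp (abs_le.mp (hbound t)).1
  have hμ : Integrable η μ := hη.integrable_of_hasCompactSupport (.of_compactSpace η)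
  have hν : Integrable (fun t ↦ -η t) ν :=
    (hη.integrable_of_hasCompactSupport (.of_compactSpace η)).neg
  have hμ_le := integral_le_measureReal_univ_mul hμ hle
  have hν_le := integral_le_measureReal_univ_mul hν hle_neg
  rw [pairing, tvNorm_eq_posPart_add_negPart] at hcert
  rw [integral_neg] at hν_le
  refine ⟨measure_compl_setOf_eq_eq_zero_of_integral_eq hμ hle (by linarith), ?_⟩
  simpa only [neg_eq_iff_eq_neg] using
    measure_compl_setOf_eq_eq_zero_of_integral_eq hν hle_neg (by rw [integral_neg]; linarith)
end

section
/- (Uniqueness of the solution under a full-rank condition.) Let p ∈ ℝ^L and set η = Φ̃*(p); assume ‖η‖_∞ ≤ 1 and that the saturation set S = { t ∈ 𝕋 : |η(t)| = 1 } is finite, S = {τ_1, …, τ_P}. Assume the L × P matrix Ψ with entries Ψ[ℓ, p] = φ_ℓ(τ_p) has trivial kernel (the map ℝ^P → ℝ^L, β ↦ Ψβ is injective). Then for any y₀ ∈ ℝ^L, if m₁, m₂ ∈ M(𝕋) both satisfy Φ̃(m_i) = y₀ and ∫ η dm_i = ‖m_i‖_TV (i = 1, 2), then m₁ = m₂. In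 particular the primal problem min { ‖m‖_TV : Φ̃(m) = y₀ } for which η is a dual certificate has at most one solution. -/
open MeasureTheory

/-!
Because `|η| ≤ 1`, one always has `∫ η dm ≤ ‖m‖_TV`, with equality only if `m⁺` is carried by
`{η = 1}` and `m⁻` by `{η = -1}`. So a measure attaining the equality is a combination
`∑_q a_q δ_{τ_q}` of Dirac masses on the saturation set, its measurements are `Φ̃(m) = Ψ a`, and
injectivity of `Ψ` recovers the weights `a = (m {τ_q})_q`, hence `m`, from `y₀`.
-/

namespace MeasureTheory

variable {X : Type*} [MeasurableSpace X]

lemma ae_eq_one_of_measureReal_univ_le_integral {μ : Measure X} [IsFiniteMeasure μ] {f : X → ℝ}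
    (hf : Integrable f μ) (hle : ∀ x, f x ≤ 1) (h : μ.real Set.univ ≤ ∫ x, f x ∂μ) :
    ∀ᵐ x ∂μ, f x = 1 := by
  have hint : ∫ x, f x ∂μ = ∫ _, (1 : ℝ) ∂μ :=
    le_antisymm (integral_mono hf (integrable_const 1) hle) (by simpa using h)
  exact (integral_eq_iff_of_ae_le hf (integrable_const 1) (.of_forall hle)).mp hint

variable [MeasurableSingletonClass X]

lemma integral_eq_sum_of_ae_mem_finset {μ : Measure X} {S : Finset X} (hS : ∀ᵐ x ∂μ, x ∈ S)
    {f : X → ℝ} (hf : Integrable f μ) : ∫ x, f x ∂μ = ∑ x ∈ S, μ.real {x} * f x := by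
  rw [integral_eq_setIntegral hS, setIntegral_finset S hf.integrableOn]
  rfl

open Classical in
lemma measureReal_eq_sum_of_ae_mem_finset {μ : Measure X} [IsFiniteMeasure μ] {S : Finset X}
    (hS : ∀ᵐ x ∂μ, x ∈ S) (s : Set X) : μ.real s = ∑ x ∈ S with x ∈ s, μ.real {x} := by
  rw [sum_measureReal_singleton, Finset.coe_filter]
  exact measureReal_congr (hS.mono fun x hx => propext ⟨fun hxs => ⟨hx, hxs⟩, And.right⟩)

namespace SignedMeasure

open Classical in
lemma apply_eq_sum_of_ae_mem_finset {m : SignedMeasure X} {S : Finset X}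
    (hS : ∀ᵐ x ∂m.totalVariation, x ∈ S) {s : Set X} (hs : MeasurableSet s) :
    m s = ∑ x ∈ S with x ∈ s, m {x} := by
  rw [totalVariation, ae_add_measure_iff] at hS
  rw [m.apply_eq_posPart_real_sub_negPart_real hs, measureReal_eq_sum_of_ae_mem_finset hS.1,
    measureReal_eq_sum_of_ae_mem_finset hS.2, ← Finset.sum_sub_distrib]
  exact Finset.sum_congr rfl fun x _ =>
    (m.apply_eq_posPart_real_sub_negPart_real (measurableSet_singleton x)).symm

lemma ext_of_ae_mem_finset {m₁ m₂ : SignedMeasure X} {S : Finset X}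
    (h₁ : ∀ᵐ x ∂m₁.totalVariation, x ∈ S) (h₂ : ∀ᵐ x ∂m₂.totalVariation, x ∈ S)
    (h : ∀ x ∈ S, m₁ {x} = m₂ {x}) : m₁ = m₂ := by
  classical
  ext s hs
  rw [apply_eq_sum_of_ae_mem_finset h₁ hs, apply_eq_sum_of_ae_mem_finset h₂ hs]
  exact Finset.sum_congr rfl fun x hx => h x (Finset.mem_filter.mp hx).1

end SignedMeasure

end MeasureTheory

section

variable {X : Type*} [MeasurableSpace X]

lemma tvNorm_eq_measureReal_posPart_add_negPart (m : SignedMeasure X) :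
    tvNorm m = m.toJordanDecomposition.posPart.real Set.univ +
      m.toJordanDecomposition.negPart.real Set.univ := by
  rw [tvNorm, SignedMeasure.totalVariation, Measure.add_apply,
    ENNReal.toReal_add (measure_ne_top _ _) (measure_ne_top _ _), measureReal_def, measureReal_def]

lemma ae_abs_eq_one_of_pairing_eq_tvNorm {η : X → ℝ} (hη : Measurable η) (hle : ∀ x, |η x| ≤ 1)
    {m : SignedMeasure X} (h : pairing η m = tvNorm m) :
    ∀ᵐ x ∂m.totalVariation, |η x| = 1 := by
  set μp := m.toJordanDecomposition.posPart
  set μn := m.toJordanDecomposition.negPart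
  have hint : ∀ μ : Measure X, [IsFiniteMeasure μ] → Integrable η μ := fun μ _ =>
    .of_bound hη.aestronglyMeasurable 1 (.of_forall hle)
  have hle_one : ∀ x, η x ≤ 1 := fun x => (abs_le.mp (hle x)).2
  have hneg_le_one : ∀ x, -η x ≤ 1 := fun x => neg_le.mp (abs_le.mp (hle x)).1
  have hpos : ∫ x, η x ∂μp ≤ μp.real Set.univ := by
    simpa using integral_mono (hint μp) (integrable_const 1) hle_one
  have hneg : -∫ x, η x ∂μn ≤ μn.real Set.univ := by
    simpa [integral_neg] using integral_mono (hint μn).neg (integrable_const 1) hneg_le_one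
  rw [pairing, tvNorm_eq_measureReal_posPart_add_negPart] at h
  have hp := ae_eq_one_of_measureReal_univ_le_integral (hint μp) hle_one (by linarith)
  have hn := ae_eq_one_of_measureReal_univ_le_integral (f := fun x => -η x) (hint μn).neg
    hneg_le_one (by rw [integral_neg]; linarith)
  rw [SignedMeasure.totalVariation, ae_add_measure_iff]
  exact ⟨hp.mono fun x hx => by simp [hx], hn.mono fun x hx => by simp [neg_eq_iff_eq_neg.mp hx]⟩

variable [MeasurableSingletonClass X]

lemma pairing_eq_sum_of_ae_mem_finset {m : SignedMeasure X} {S : Finset X}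
    (hS : ∀ᵐ x ∂m.totalVariation, x ∈ S) {f : X → ℝ} (hf : Integrable f m.totalVariation) :
    pairing f m = ∑ x ∈ S, f x * m {x} := by
  have hfp := hf.mono_measure (Measure.le_add_right le_rfl)
  have hfn := hf.mono_measure (Measure.le_add_left le_rfl)
  rw [SignedMeasure.totalVariation, ae_add_measure_iff] at hS
  rw [pairing, integral_eq_sum_of_ae_mem_finset hS.1 hfp,
    integral_eq_sum_of_ae_mem_finset hS.2 hfn, ← Finset.sum_sub_distrib]
  refine Finset.sum_congr rfl fun x _ => ?_
  rw [m.apply_eq_posPart_real_sub_negPart_real (measurableSet_singleton x)]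
  ring

end

theorem uniqueness_of_primal_solution_of_full_rank_general (T : ℝ) [Fact (0 < T)]
    (L : ℕ) (φ : Fin L → AddCircle T → ℝ) (hφ : ∀ ℓ, Continuous (φ ℓ))
    (p : Fin L → ℝ) (η : AddCircle T → ℝ)
    (hη : η = fun t => ∑ ℓ, p ℓ * φ ℓ t)
    (hηnorm : supNorm η ≤ 1)
    (P : ℕ) (τ : Fin P → AddCircle T) (hτinj : Function.Injective τ)
    (hτrange : Set.range τ = {t : AddCircle T | |η t| = 1})
    (hfullrank : Function.Injective fun β : Fin P → ℝ =>
      (Matrix.of fun ℓ q => φ ℓ (τ q)).mulVec β)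
    (y₀ : Fin L → ℝ) (m₁ m₂ : SignedMeasure (AddCircle T))
    (hm₁ : ∀ ℓ, pairing (φ ℓ) m₁ = y₀ ℓ) (hm₂ : ∀ ℓ, pairing (φ ℓ) m₂ = y₀ ℓ)
    (hc₁ : pairing η m₁ = tvNorm m₁) (hc₂ : pairing η m₂ = tvNorm m₂) :
    m₁ = m₂ := by
  classical
  have hηc : Continuous η := hη ▸ continuous_finsetSum _ fun ℓ _ => continuous_const.mul (hφ ℓ)
  have hηle : ∀ t, |η t| ≤ 1 := fun t =>
    (le_csSup (isCompact_range hηc.abs).bddAbove ⟨t, rfl⟩).trans hηnorm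
  have hsupp : ∀ m, pairing η m = tvNorm m → ∀ᵐ t ∂m.totalVariation, t ∈ Finset.univ.image τ :=
    fun m hm => (ae_abs_eq_one_of_pairing_eq_tvNorm hηc.measurable hηle hm).mono fun t ht => by
      simpa [← Set.mem_range, hτrange] using ht
  have hweights : ∀ m, pairing η m = tvNorm m →
      ∀ ℓ, pairing (φ ℓ) m = (Matrix.of fun ℓ q => φ ℓ (τ q)).mulVec (fun q => m {τ q}) ℓ :=
    fun m hm ℓ => by
      rw [pairing_eq_sum_of_ae_mem_finset (hsupp m hm)
        ((hφ ℓ).integrable_of_hasCompactSupport (.of_compactSpace _)),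
        Finset.sum_image hτinj.injOn]
      rfl
  have hβ : (fun q => m₁ {τ q}) = fun q => m₂ {τ q} :=
    hfullrank (funext fun ℓ => by
      simp only [← hweights m₁ hc₁, ← hweights m₂ hc₂, hm₁, hm₂])
  refine SignedMeasure.ext_of_ae_mem_finset (hsupp m₁ hc₁) (hsupp m₂ hc₂) ?_
  simpa [funext_iff] using hβ

/-- **uniqueness under a full-rank condition.** Let `η = Φ̃*(p)` with
`‖η‖_∞ ≤ 1`, whose saturation set is finite, enumerated by an injective
`τ : Fin P → 𝕋` with range `{ t : |η t| = 1 }`.  If the `L × P` matrix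
`Ψ[ℓ, q] = φ_ℓ(τ_q)` has trivial kernel, then any two measures `m₁, m₂` with
`Φ̃(m_i) = y₀` and `∫ η dm_i = ‖m_i‖_TV` are equal. -/
theorem uniqueness_of_primal_solution_of_full_rank (T : ℝ) [Fact (0 < T)]
    (L : ℕ) (hL : 1 ≤ L) (φ : Fin L → AddCircle T → ℝ) (hφ : ∀ ℓ, Continuous (φ ℓ))
    (p : Fin L → ℝ) (η : AddCircle T → ℝ)
    (hη : η = fun t => ∑ ℓ, p ℓ * φ ℓ t)
    (hηnorm : supNorm η ≤ 1)
    (P : ℕ) (τ : Fin P → AddCircle T) (hτinj : Function.Injective τ)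
    (hτrange : Set.range τ = {t : AddCircle T | |η t| = 1})
    (hfullrank : Function.Injective fun β : Fin P → ℝ =>
      (Matrix.of fun ℓ q => φ ℓ (τ q)).mulVec β)
    (y₀ : Fin L → ℝ) (m₁ m₂ : SignedMeasure (AddCircle T))
    (hm₁ : ∀ ℓ, pairing (φ ℓ) m₁ = y₀ ℓ) (hm₂ : ∀ ℓ, pairing (φ ℓ) m₂ = y₀ ℓ)
    (hc₁ : pairing η m₁ = tvNorm m₁) (hc₂ : pairing η m₂ = tvNorm m₂) :
    m₁ = m₂ :=
  uniqueness_of_primal_solution_of_full_rank_general T L φ hφ p η hη hηnorm P τ hτinj hτrange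
    hfullrank y₀ m₁ m₂ hm₁ hm₂ hc₁ hc₂
end
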